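/- arXiv:1407.7394 — 11 statements merged into one kernel-verified Lean document; each statement's English description precedes it below -/
import Mathlib

section
/- Let Q₋₁, Q₀, Q₁, … be nonzero polynomials in ℚ[z] satisfying the difference Burchnall–Chaundy equation for all n ≥ 0, and suppose the initial data satisfy the constraint Q₀(z+1)·Q₋₁(z−1) + Q₋₁(z+1)·Q₀(z−1) − 2·Q₋₁(z)·Q₀(z) = 0. Then for every n ≥ 0 the identity Q_{n+1}(z+1)·Q_{n−1}(z−1) − Q_{n+1}(z−1)·Q_{n−1}(z+1) = 2·Q_n(z)² holds; equivalently, the rescaled polynomials R_n(z) := 2^{−n(n+1)/2}·Q_n(z) satisfy the difference Dodgson equation R_{n+1}(z+1)·R_{n−1}(z−1) − R_{n+1}(z−1)·R_{n−1}(z+1) = R_n(z)² for all n ≥ 0. -/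
open Polynomial

/-- difference Burchnall–Chaundy sequences satisfying the constraint
`Φ₀ = 0` satisfy the (factor-2) difference Dodgson equation; equivalently, the
rescaled polynomials `R n = 2^{-n(n+1)/2} Q n` satisfy the difference Dodgson equation.
Indexing convention: `Q n` here is `Q_{n-1}` of the paper, so `Q 0 = Q₋₁`, `Q 1 = Q₀`. -/
theorem dBCh_implies_dodgson (Q : ℕ → Polynomial ℚ)
    (hne : ∀ n, Q n ≠ 0)
    (hrec : ∀ n : ℕ,
      (Q (n + 2)).comp (X + 1) * Q n - Q (n + 2) * (Q n).comp (X + 1)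
        = Q (n + 1) * (Q (n + 1)).comp (X + 1))
    (hconstraint :
      (Q 1).comp (X + 1) * (Q 0).comp (X - 1) + (Q 0).comp (X + 1) * (Q 1).comp (X - 1)
        - 2 * (Q 0) * (Q 1) = 0) :
    (∀ n : ℕ,
      (Q (n + 2)).comp (X + 1) * (Q n).comp (X - 1)
        - (Q (n + 2)).comp (X - 1) * (Q n).comp (X + 1)
        = 2 * (Q (n + 1)) ^ 2) ∧
    (∀ R : ℕ → Polynomial ℚ,
      (∀ m : ℕ, R m = Polynomial.C (((2 : ℚ) ^ ((m - 1) * m / 2))⁻¹) * Q m) →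
      ∀ n : ℕ,
        (R (n + 2)).comp (X + 1) * (R n).comp (X - 1)
          - (R (n + 2)).comp (X - 1) * (R n).comp (X + 1)
          = (R (n + 1)) ^ 2) := by
  -- the recurrence shifted by z → z - 1
  have hA : ∀ n : ℕ,
      Q (n + 2) * (Q n).comp (X - 1) - (Q (n + 2)).comp (X - 1) * Q n
        = (Q (n + 1)).comp (X - 1) * Q (n + 1) := by
    intro n
    have h := congrArg (fun p : Polynomial ℚ => p.comp (X - 1)) (hrec n)
    have hc : ((X : Polynomial ℚ) + 1).comp (X - 1) = X := by
      simp [add_comp, X_comp, one_comp]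
    simp only [sub_comp, mul_comp, comp_assoc, hc, comp_X] at h
    exact h
  -- the invariant Φ_n = 0
  have hΦ : ∀ n : ℕ,
      (Q (n + 1)).comp (X + 1) * (Q n).comp (X - 1)
        + (Q n).comp (X + 1) * (Q (n + 1)).comp (X - 1)
        - 2 * Q n * Q (n + 1) = 0 := by
    intro n
    induction n with
    | zero => exact hconstraint
    | succ k ih =>
      apply mul_left_cancel₀ (hne k)
      rw [mul_zero]
      linear_combination (Q (k + 1)).comp (X - 1) * hrec k
        - (Q (k + 1)).comp (X + 1) * hA k + Q (k + 2) * ih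
  -- the main (factor-2) Dodgson identity
  have hD : ∀ n : ℕ,
      (Q (n + 2)).comp (X + 1) * (Q n).comp (X - 1)
        - (Q (n + 2)).comp (X - 1) * (Q n).comp (X + 1)
        = 2 * (Q (n + 1)) ^ 2 := by
    intro n
    apply mul_left_cancel₀ (hne n)
    linear_combination (Q n).comp (X - 1) * hrec n
      + (Q n).comp (X + 1) * hA n + Q (n + 1) * hΦ n
  refine ⟨hD, ?_⟩
  intro R hR n
  -- the triangular-number step
  have estep : ∀ m : ℕ, m * (m + 1) / 2 = (m - 1) * m / 2 + m := by
    intro m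
    cases m with
    | zero => simp
    | succ k =>
      have h : (k + 1) * (k + 1 + 1) = k * (k + 1) + 2 * (k + 1) := by ring
      simp only [Nat.add_sub_cancel, h, Nat.add_mul_div_left _ _ (by norm_num : 0 < 2)]
  set a : ℕ := (n - 1) * n / 2 with ha
  have e1 : n * (n + 1) / 2 = a + n := estep n
  have e2 : (n + 2 - 1) * (n + 2) / 2 = a + n + (n + 1) := by
    have : (n + 2 - 1) * (n + 2) = (n + 1) * (n + 1 + 1) := by norm_num
    rw [this, estep (n + 1), Nat.add_sub_cancel, e1]
  have e3 : (n + 1 - 1) * (n + 1) / 2 = a + n := by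
    rw [Nat.add_sub_cancel, e1]
  have hscalar : ((2 : ℚ) ^ ((n + 2 - 1) * (n + 2) / 2))⁻¹
      * ((2 : ℚ) ^ ((n - 1) * n / 2))⁻¹ * 2
      = (((2 : ℚ) ^ ((n + 1 - 1) * (n + 1) / 2))⁻¹) ^ 2 := by
    rw [e2, e3, ← ha, pow_add, pow_add]
    have h2 : (2 : ℚ) ≠ 0 := by norm_num
    field_simp
    ring
  have hCeq : (C (((2 : ℚ) ^ ((n + 2 - 1) * (n + 2) / 2))⁻¹))
      * (C (((2 : ℚ) ^ ((n - 1) * n / 2))⁻¹)) * 2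
      = (C (((2 : ℚ) ^ ((n + 1 - 1) * (n + 1) / 2))⁻¹)) ^ 2 := by
    have h2 : (2 : Polynomial ℚ) = C 2 := (map_ofNat C 2).symm
    rw [h2, ← C_mul, ← C_mul, ← C_pow, hscalar]
  rw [hR (n + 2), hR n, hR (n + 1)]
  simp only [mul_comp, C_comp]
  linear_combination (C (((2 : ℚ) ^ ((n + 2 - 1) * (n + 2) / 2))⁻¹)
      * C (((2 : ℚ) ^ ((n - 1) * n / 2))⁻¹)) * hD n
    + (Q (n + 1)) ^ 2 * hCeq
end

section
/- Let Q₋₁, Q₀, Q₁, … be polynomials in ℚ[z] and fix n ≥ 0. Suppose the difference Burchnall–Chaundy relation Q_{n+1}(z+1)·Q_{n−1}(z) − Q_{n+1}(z)·Q_{n−1}(z+1) = Q_n(z)·Q_n(z+1) holds as a polynomial identity, that Q_{n−1} ≠ 0, and that Φ_n = 0. Then Φ_{n+1} = 0, where Φ_m(z) := Q_m(z+1)·Q_{m−1}(z−1) + Q_{m−1}(z+1)·Q_m(z−1) − 2·Q_{m−1}(z)·Q_m(z). In other words, the constraint Φ = 0 is preserved by the difference Burchnall–Chaundy dynamics. 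-/
open Polynomial

/-- the constraint `Φ = 0` is preserved by the difference
Burchnall–Chaundy dynamics. Indexing convention: `Q m` here is `Q_{m-1}` of the
paper, so `Φ_n(z) = Q_n(z+1)Q_{n-1}(z-1) + Q_{n-1}(z+1)Q_n(z-1) - 2 Q_{n-1}(z)Q_n(z)`
becomes the expression below in `Q (n+1)` and `Q n`. -/
theorem constraint_preserved (Q : ℕ → Polynomial ℚ) (n : ℕ)
    (hrec :
      (Q (n + 2)).comp (X + 1) * Q n - Q (n + 2) * (Q n).comp (X + 1)
        = Q (n + 1) * (Q (n + 1)).comp (X + 1))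
    (hne : Q n ≠ 0)
    (hPhi :
      (Q (n + 1)).comp (X + 1) * (Q n).comp (X - 1)
        + (Q n).comp (X + 1) * (Q (n + 1)).comp (X - 1)
        - 2 * (Q n) * (Q (n + 1)) = 0) :
    (Q (n + 2)).comp (X + 1) * (Q (n + 1)).comp (X - 1)
      + (Q (n + 1)).comp (X + 1) * (Q (n + 2)).comp (X - 1)
      - 2 * (Q (n + 1)) * (Q (n + 2)) = 0 := by
  -- shift the recurrence by `X - 1`
  have hrec' := congrArg (fun p => p.comp (X - 1)) hrec
  simp only [sub_comp, mul_comp, comp_assoc, add_comp, X_comp, one_comp,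
    sub_add_cancel, comp_X] at hrec'
  have key : Q n *
      ((Q (n + 2)).comp (X + 1) * (Q (n + 1)).comp (X - 1)
        + (Q (n + 1)).comp (X + 1) * (Q (n + 2)).comp (X - 1)
        - 2 * (Q (n + 1)) * (Q (n + 2))) = 0 := by
    linear_combination (Q (n + 1)).comp (X - 1) * hrec
      - (Q (n + 1)).comp (X + 1) * hrec' + Q (n + 2) * hPhi
  rcases mul_eq_zero.mp key with h | h
  · exact absurd h hne
  · exact h
end

section
/- Let Q₋₁, Q₀, Q₁, … be polynomials in ℚ[z] and fix n ≥ 0. Suppose the difference Burchnall–Chaundy relation Q_{n+1}(z+1)·Q_{n−1}(z) − Q_{n+1}(z)·Q_{n−1}(z+1) = Q_n(z)·Q_n(z+1) holds as a polynomial identity, that Q_{n−1} ≠ 0, and that Φ_n(z) := Q_n(z+1)·Q_{n−1}(z−1) + Q_{n−1}(z+1)·Q_n(z−1) − 2·Q_{n−1}(z)·Q_n(z) = 0. Then Q_{n+1}(z+1)·Q_{n−1}(z−1) − Q_{n+1}(z−1)·Q_{n−1}(z+1) = 2·Q_n(z)². -/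
open Polynomial

lemma comp_shift_cancel (p : Polynomial ℚ) : (p.comp (X + 1)).comp (X - 1) = p := by
  rw [Polynomial.comp_assoc]
  simp [Polynomial.add_comp, Polynomial.sub_comp]

/-- under the difference Burchnall–Chaundy relation at step `n`,
with `Q_{n-1} ≠ 0` and the constraint `Φ_n = 0`, the factor-2 Dodgson relation
holds. Indexing convention: `Q m` here is `Q_{m-1}` of the paper. -/
theorem dodgson_step (Q : ℕ → Polynomial ℚ) (n : ℕ)
    (hrec :
      (Q (n + 2)).comp (X + 1) * Q n - Q (n + 2) * (Q n).comp (X + 1)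
        = Q (n + 1) * (Q (n + 1)).comp (X + 1))
    (hne : Q n ≠ 0)
    (hPhi :
      (Q (n + 1)).comp (X + 1) * (Q n).comp (X - 1)
        + (Q n).comp (X + 1) * (Q (n + 1)).comp (X - 1)
        - 2 * (Q n) * (Q (n + 1)) = 0) :
    (Q (n + 2)).comp (X + 1) * (Q n).comp (X - 1)
      - (Q (n + 2)).comp (X - 1) * (Q n).comp (X + 1)
      = 2 * (Q (n + 1)) ^ 2 := by
  have hrec' := congrArg (fun p : Polynomial ℚ => p.comp (X - 1)) hrec
  simp only [Polynomial.sub_comp, Polynomial.mul_comp, comp_shift_cancel] at hrec'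
  -- hrec' : Q (n+2) * (Q n).comp (X-1) - (Q (n+2)).comp (X-1) * Q n
  --          = (Q (n+1)).comp (X-1) * Q (n+1)
  have key : Q n * ((Q (n + 2)).comp (X + 1) * (Q n).comp (X - 1)
      - (Q (n + 2)).comp (X - 1) * (Q n).comp (X + 1))
      = Q n * (2 * (Q (n + 1)) ^ 2) := by
    have h1 := congrArg (· * (Q n).comp (X - 1)) hrec
    have h2 := congrArg (· * (Q n).comp (X + 1)) hrec'
    have hPhi' : (Q (n + 1)).comp (X + 1) * (Q n).comp (X - 1)
        + (Q n).comp (X + 1) * (Q (n + 1)).comp (X - 1)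
        = 2 * (Q n) * (Q (n + 1)) := by linear_combination hPhi
    linear_combination h1 + h2 + Q (n+1) * hPhi'
  exact mul_left_cancel₀ hne key
end

section
/- Jacobi identity for Casoratians: let F be a field, let f₁, …, f_{k+1} and χ be arbitrary functions ℤ → F, and define the Casoratian of functions g₁, …, g_m by C(g₁,…,g_m)(z) := det(g_i(z+j−1))_{i,j=1,…,m}. Write (Tf)(z) := f(z+1) and [A,B] := A·(TB) − B·(TA) for functions A, B : ℤ → F. Set C_k := C(f₁,…,f_k), C_{k+1} := C(f₁,…,f_{k+1}), C_k(χ) := C(f₁,…,f_k,χ), and C_{k+1}(χ) := C(f₁,…,f_{k+1},χ). Then [C_k(χ), C_{k+1}] = −(TC_k)·C_{k+1}(χ) identically on ℤ. -/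
/-!
The identity is the Desnanot–Jacobi identity for the Casoratian matrix `N` of
`f₁, …, f_{k+1}, χ` at `z`: deleting one of the last two rows and the first or last column of `N`
leaves the Casoratian matrix of `C_k(χ)` or `C_{k+1}` at `z + 1` or `z`, and deleting both rows
and both columns leaves that of `C_k` at `z + 1`.

Desnanot–Jacobi itself: multiplying `M` on the left by the identity matrix with rows `p, p'`
replaced by rows `q, q'` of `adj M` replaces rows `p, p'` of `M` by `det M • e_q, det M • e_q'`.
Taking determinants gives the identity times `det M`; cancelling `det M` is legitimate for the
generic matrix over `ℤ[X_ij]`, of which every matrix is a specialization.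
-/

/-- The Casoratian `C(f₁,…,f_m)(z) = det (f_i(z+j-1))` of a family of functions
`ℤ → F` (rows indexed by `i`, columns by `j`; here `i j : Fin m` are 0-indexed). -/
noncomputable def casoratian {F : Type*} [Field F] {m : ℕ} (f : Fin m → ℤ → F) : ℤ → F :=
  fun z => Matrix.det (Matrix.of fun i j : Fin m => f i (z + (j : ℕ)))

namespace Matrix

theorem submatrix_updateRow_of_injective {l m n α : Type*} [DecidableEq m] [DecidableEq n]
    (A : Matrix n l α) {r : m → n} (hr : Function.Injective r) (c : m → l) (i : m) (v : l → α) :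
    (A.updateRow (r i) v).submatrix r c = (A.submatrix r c).updateRow i (v ∘ c) := by
  ext a b
  simp [updateRow_apply, hr.eq_iff]

section Jacobi

variable {n R : Type*} [Fintype n] [DecidableEq n] [CommRing R]

theorem det_one_updateRow_updateRow {p p' : n} (hp : p ≠ p') (u v : n → R) :
    (((1 : Matrix n n R).updateRow p u).updateRow p' v).det = u p * v p' - u p' * v p := by
  -- the matrix is `1 + A * B` through `Fin 2`, so Weinstein–Aronszajn leaves a `2 × 2` determinant
  let w : Fin 2 → n := ![p, p']
  let r : Fin 2 → n → R := ![u, v]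
  let A : Matrix n (Fin 2) R := of fun i l => (Pi.single (w l) 1 : n → R) i
  let B : Matrix (Fin 2) n R := of fun l => r l - Pi.single (w l) 1
  have hAB : ((1 : Matrix n n R).updateRow p u).updateRow p' v = 1 + A * B := by
    ext i j
    simp only [updateRow_apply, add_apply, mul_apply, Fin.sum_univ_two, one_apply, A, B, w, r]
    simp [Pi.single_apply]
    split_ifs <;> grind
  rw [hAB, det_one_add_mul_comm, det_fin_two]
  simp [A, B, w, r, mul_apply', dotProduct_single, hp, hp.symm]

theorem updateRow_updateRow_adjugate_mul (M : Matrix n n R) (p p' q q' : n) :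
    ((1 : Matrix n n R).updateRow p (M.adjugate q)).updateRow p' (M.adjugate q') * M =
      (M.updateRow p (M.det • Pi.single q 1)).updateRow p' (M.det • Pi.single q' 1) := by
  have hrow : ∀ q, M.adjugate q ᵥ* M = M.det • Pi.single q 1 := fun q => by
    ext j
    rw [vecMul, ← mul_apply', adjugate_mul]
    simp [one_apply, Pi.single_apply, eq_comm]
  simp only [updateRow_mul, Matrix.one_mul, hrow]

theorem det_mul_det_updateRow_updateRow_single_of_det_ne_zero [IsDomain R] (M : Matrix n n R)
    (hM : M.det ≠ 0) {p p' : n} (hp : p ≠ p') (q q' : n) :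
    M.det * ((M.updateRow p (Pi.single q 1)).updateRow p' (Pi.single q' 1)).det =
      M.adjugate q p * M.adjugate q' p' - M.adjugate q p' * M.adjugate q' p := by
  refine mul_left_cancel₀ hM ?_
  have h := congrArg det (updateRow_updateRow_adjugate_mul M p p' q q')
  rw [det_mul, det_one_updateRow_updateRow hp, det_updateRow_smul, updateRow_comm _ hp,
    det_updateRow_smul, updateRow_comm _ hp.symm] at h
  linear_combination -h

theorem det_mul_det_updateRow_updateRow_single (M : Matrix n n R) {p p' : n} (hp : p ≠ p')
    (q q' : n) :
    M.det * ((M.updateRow p (Pi.single q 1)).updateRow p' (Pi.single q' 1)).det =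
      M.adjugate q p * M.adjugate q' p' - M.adjugate q p' * M.adjugate q' p := by
  let X := mvPolynomialX n n ℤ
  let φ := MvPolynomial.aeval (R := ℤ) fun ij : n × n => M ij.1 ij.2
  have hX : φ.mapMatrix X = M := mvPolynomialX_mapMatrix_aeval ℤ M
  have hadj : ∀ i j, φ (X.adjugate i j) = M.adjugate i j := fun i j => by
    rw [← hX, ← AlgHom.map_adjugate]
    rfl
  have hsingle : ∀ i : n, ⇑φ ∘ Pi.single i 1 = Pi.single i 1 := fun i => by
    ext j
    simp [Pi.single_apply, apply_ite φ]
  have h := congrArg φ <| det_mul_det_updateRow_updateRow_single_of_det_ne_zero X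
    (det_mvPolynomialX_ne_zero n ℤ) hp q q'
  simp only [map_mul, map_sub, hadj, AlgHom.map_det, AlgHom.mapMatrix_apply, map_updateRow] at h
  rwa [← AlgHom.mapMatrix_apply, hX, hsingle, hsingle] at h

end Jacobi

theorem det_updateRow_single_one {R : Type*} [CommRing R] {k : ℕ}
    (A : Matrix (Fin (k + 1)) (Fin (k + 1)) R) (i j : Fin (k + 1)) :
    (A.updateRow i (Pi.single j 1)).det =
      (-1) ^ ((i : ℕ) + j) * (A.submatrix i.succAbove j.succAbove).det := by
  rw [← adjugate_apply, adjugate_fin_succ_eq_det_submatrix]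

end Matrix

theorem Fin.snoc_comp_succAbove_castSucc_last {k : ℕ} {α : Type*} (f : Fin (k + 1) → α) (x : α) :
    (Fin.snoc f x : Fin (k + 2) → α) ∘ (Fin.last k).castSucc.succAbove =
      Fin.snoc (fun i => f i.castSucc) x := by
  ext i
  induction i using Fin.lastCases with
  | last => simp
  | cast i => simp [Fin.succAbove_castSucc_of_lt _ _ (Fin.castSucc_lt_last i)]

open Matrix

def casoratianMatrix {α : Type*} {m : ℕ} (f : Fin m → ℤ → α) (z : ℤ) : Matrix (Fin m) (Fin m) α :=
  of fun i j => f i (z + (j : ℕ))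

section Casoratian

variable {m : ℕ}

theorem casoratianMatrix_submatrix_castSucc {α : Type*} (f : Fin (m + 1) → ℤ → α)
    (r : Fin m → Fin (m + 1)) (z : ℤ) :
    (casoratianMatrix f z).submatrix r Fin.castSucc = casoratianMatrix (f ∘ r) z := by
  ext i j
  simp [casoratianMatrix]

theorem casoratianMatrix_submatrix_succ {α : Type*} (f : Fin (m + 1) → ℤ → α)
    (r : Fin m → Fin (m + 1)) (z : ℤ) :
    (casoratianMatrix f z).submatrix r Fin.succ = casoratianMatrix (f ∘ r) (z + 1) := by
  ext i j
  simp [casoratianMatrix, add_comm, add_left_comm]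

variable {F : Type*} [Field F]

theorem casoratian_eq_det (f : Fin m → ℤ → F) (z : ℤ) :
    casoratian f z = (casoratianMatrix f z).det :=
  rfl

theorem adjugate_casoratianMatrix_zero (f : Fin (m + 1) → ℤ → F) (z : ℤ) (i : Fin (m + 1)) :
    (casoratianMatrix f z).adjugate 0 i =
      (-1) ^ (i : ℕ) * casoratian (f ∘ i.succAbove) (z + 1) := by
  rw [adjugate_fin_succ_eq_det_submatrix, Fin.succAbove_zero, casoratianMatrix_submatrix_succ,
    casoratian_eq_det, Fin.val_zero, add_zero]

theorem adjugate_casoratianMatrix_last (f : Fin (m + 1) → ℤ → F) (z : ℤ) (i : Fin (m + 1)) :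
    (casoratianMatrix f z).adjugate (Fin.last m) i =
      (-1) ^ ((i : ℕ) + m) * casoratian (f ∘ i.succAbove) z := by
  rw [adjugate_fin_succ_eq_det_submatrix, Fin.succAbove_last, casoratianMatrix_submatrix_castSucc,
    casoratian_eq_det, Fin.val_last]

theorem det_updateRow_updateRow_casoratianMatrix (f : Fin (m + 2) → ℤ → F) (z : ℤ) :
    (((casoratianMatrix f z).updateRow (Fin.last m).castSucc (Pi.single 0 1)).updateRow
        (Fin.last (m + 1)) (Pi.single (Fin.last (m + 1)) 1)).det =
      (-1) ^ m * casoratian (fun i => f i.castSucc.castSucc) (z + 1) := by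
  have hsingle : (Pi.single 0 1 : Fin (m + 2) → F) ∘ Fin.castSucc = Pi.single 0 1 := by
    ext j
    simp [Pi.single_apply]
  rw [det_updateRow_single_one, Fin.succAbove_last,
    submatrix_updateRow_of_injective _ (Fin.castSucc_injective _), hsingle,
    casoratianMatrix_submatrix_castSucc, ← adjugate_apply, adjugate_casoratianMatrix_zero,
    Fin.succAbove_last, Fin.val_last, ← two_mul, pow_mul, neg_one_sq, one_pow, one_mul]
  rfl

end Casoratian

/-- Jacobi identity for Casoratians:
`[C_k(χ), C_{k+1}] = -(T C_k) · C_{k+1}(χ)`, where `C_k = C(f₁,…,f_k)`,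
`C_k(χ) = C(f₁,…,f_k,χ)`, `(Tf)(z) = f(z+1)` and `[A,B] = A·(TB) - B·(TA)`. -/
theorem casoratian_jacobi_identity {F : Type*} [Field F] (k : ℕ)
    (f : Fin (k + 1) → ℤ → F) (χ : ℤ → F) :
    ∀ z : ℤ,
      casoratian (Fin.snoc (fun i : Fin k => f i.castSucc) χ) z * casoratian f (z + 1)
        - casoratian f z * casoratian (Fin.snoc (fun i : Fin k => f i.castSucc) χ) (z + 1)
      = -(casoratian (fun i : Fin k => f i.castSucc) (z + 1)) * casoratian (Fin.snoc f χ) z := by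
  intro z
  have jacobi := det_mul_det_updateRow_updateRow_single (casoratianMatrix (Fin.snoc f χ) z)
    (Fin.castSucc_lt_last (Fin.last k)).ne 0 (Fin.last (k + 1))
  rw [det_updateRow_updateRow_casoratianMatrix, adjugate_casoratianMatrix_zero,
    adjugate_casoratianMatrix_zero, adjugate_casoratianMatrix_last, adjugate_casoratianMatrix_last,
    Fin.snoc_comp_succAbove_castSucc_last, Fin.succAbove_last, Fin.snoc_comp_castSucc,
    ← casoratian_eq_det] at jacobi
  simp only [Fin.snoc_castSucc, Fin.val_last, Fin.val_castSucc, Even.neg_one_pow ⟨k + 1, rfl⟩,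
    Odd.neg_one_pow (⟨k, by ring⟩ : Odd (k + (k + 1))), pow_succ] at jacobi
  refine mul_left_cancel₀ (pow_ne_zero k (neg_ne_zero.2 one_ne_zero) : (-1 : F) ^ k ≠ 0) ?_
  linear_combination jacobi
end

section
/- Let φ₁, φ₂, … ∈ ℚ[z] satisfy φ₁(z+1) − φ₁(z) = 1 and, for every k ≥ 2, φ_k(z+2) − 2·φ_k(z+1) + φ_k(z) = φ_{k−1}(z). Then for every k ≥ 1 the Casoratian with the constant function 1 adjoined satisfies C(φ₁,…,φ_k, 1) = (−1)^k · C(φ₁,…,φ_{k−1}), where C(φ₁,…,φ₀) is understood as 1. -/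
/-!
Subtracting from each column of a Casoratian the previous one replaces every row `f` by its
forward difference `Δf = f(z+1) - f(z)`, and turns a row of ones into `(1, 0, …, 0)`; expanding
along that row gives `C(f₁,…,f_k, 1) = (-1)^k C(Δf₁,…,Δf_k)` and `C(1, g₁,…,g_k) = C(Δg₁,…,Δg_k)`.
Since `Δφ₁ = 1`, the first identity followed by the second applied to `g_i = Δφ_{i+1}` gives
`C(φ₁,…,φ_k, 1) = (-1)^k C(Δ²φ₂,…,Δ²φ_k) = (-1)^k C(φ₁,…,φ_{k-1})`.
-/

open Polynomial

noncomputable def polyCasoratian {m : ℕ} (f : Fin m → Polynomial ℚ) : Polynomial ℚ :=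
  Matrix.det (Matrix.of fun i j : Fin m => (f i).comp (X + ((j : ℕ) : Polynomial ℚ)))

namespace Matrix

theorem det_eq_neg_one_pow_mul_det_colDiff_of_row_eq_one {R : Type*} [CommRing R] {n : ℕ}
    (M : Matrix (Fin (n + 1)) (Fin (n + 1)) R) (r : Fin (n + 1)) (hr : ∀ j, M r j = 1) :
    M.det = (-1) ^ (r : ℕ) *
      (of fun i j : Fin n => M (r.succAbove i) j.succ - M (r.succAbove i) j.castSucc).det := by
  -- Differencing consecutive columns keeps the determinant and turns row `r` into `(1, 0, …, 0)`.
  set D : Matrix (Fin (n + 1)) (Fin (n + 1)) R :=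
    of fun i j => Fin.cases (M i 0) (fun j => M i j.succ - M i j.castSucc) j
  have hMD : M.det = D.det :=
    det_eq_of_forall_col_eq_smul_add_pred (fun _ => 1) (fun _ => rfl) (fun _ _ => by simp [D])
  rw [hMD, det_succ_row D r, Fin.sum_univ_succ, Finset.sum_eq_zero fun j _ => by simp [D, hr]]
  simp [D, hr, submatrix]

end Matrix

noncomputable def polyFwdDiff (g : ℚ[X]) : ℚ[X] := g.comp (X + 1) - g

theorem polyFwdDiff_comp_X_add_natCast (g : ℚ[X]) (n : ℕ) :
    (polyFwdDiff g).comp (X + (n : ℚ[X])) =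
      g.comp (X + ((n + 1 : ℕ) : ℚ[X])) - g.comp (X + (n : ℚ[X])) := by
  rw [polyFwdDiff, sub_comp, comp_assoc]
  congr 2
  simp only [add_comp, X_comp, one_comp, Nat.cast_succ]
  ring

theorem polyFwdDiff_polyFwdDiff (g : ℚ[X]) :
    polyFwdDiff (polyFwdDiff g) = g.comp (X + 2) - 2 * g.comp (X + 1) + g := by
  have h : (X + 1 : ℚ[X]).comp (X + 1) = X + 2 := by
    simp only [add_comp, X_comp, one_comp]; ring
  simp only [polyFwdDiff, sub_comp, comp_assoc, h]
  ring

theorem polyCasoratian_insertNth_one {n : ℕ} (r : Fin (n + 1)) (f : Fin n → ℚ[X]) :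
    polyCasoratian (Fin.insertNth r 1 f) = (-1) ^ (r : ℕ) * polyCasoratian (polyFwdDiff ∘ f) := by
  rw [polyCasoratian, Matrix.det_eq_neg_one_pow_mul_det_colDiff_of_row_eq_one _ r
    (fun j => by simp)]
  simp [polyCasoratian, polyFwdDiff_comp_X_add_natCast]

/-- if `Δφ₁ = 1` and `Δ²φ_k = φ_{k-1}` for `k ≥ 2`, then
`C(φ₁,…,φ_k, 1) = (-1)^k · C(φ₁,…,φ_{k-1})` for every `k ≥ 1`
(with `C()` of the empty family understood as `1`).
Indexing convention: `φ i` here is `φ_{i+1}` of the paper; the statement is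
quantified over `m : ℕ` with `k = m + 1 ≥ 1`. -/
theorem casoratian_append_one (φ : ℕ → Polynomial ℚ)
    (h1 : (φ 0).comp (X + 1) - φ 0 = 1)
    (h2 : ∀ k : ℕ,
      (φ (k + 1)).comp (X + 2) - 2 * (φ (k + 1)).comp (X + 1) + φ (k + 1) = φ k) :
    ∀ m : ℕ,
      polyCasoratian (Fin.snoc (fun i : Fin (m + 1) => φ i) (1 : Polynomial ℚ))
        = (-1) ^ (m + 1) * polyCasoratian (fun i : Fin m => φ i) := by
  intro m
  have hdiff : polyFwdDiff ∘ (fun i : Fin (m + 1) => φ i) =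
      Fin.insertNth 0 1 (fun i : Fin m => polyFwdDiff (φ (i + 1))) := by
    funext i
    induction i using Fin.cases with
    | zero => exact h1
    | succ i => simp
  rw [← Fin.insertNth_last', polyCasoratian_insertNth_one, Fin.val_last, hdiff,
    polyCasoratian_insertNth_one, Fin.val_zero, pow_zero, one_mul]
  congr 2
  funext i
  exact (polyFwdDiff_polyFwdDiff _).trans (h2 i)
end

section
/- With x_k ∈ R[z] defined by the Hessenberg determinant formula over R = ℚ[t₁, t₂, t₃, …], and Q_n := det(x_{2i−1}(z+j−1))_{i,j=1,…,n} the Casoratian of x₁, x₃, …, x_{2n−1}, the polynomial Q_n does not depend on any even-indexed variable: for every n ≥ 1 and every p ≥ 1, the formal partial derivative of Q_n with respect to t_{2p} is zero (equivalently, every coefficient of Q_n, as a polynomial in z over R, has vanishing partial derivative with respect to t_{2p}). -/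
open Polynomial

noncomputable section

/-- The base ring `R = ℚ[t₁, t₂, t₃, …]`: polynomials in countably many
variables `t_j = MvPolynomial.X j` (only indices `j ≥ 1` occur). -/
abbrev Rt : Type := MvPolynomial ℕ ℚ

/-- `z_j := (-1)^{j+1} (z + t_j)` as an element of `R[z]`. -/
def zj (j : ℕ) : Polynomial Rt :=
  (-1) ^ (j + 1) * (X + C (MvPolynomial.X j))

/-- The `k×k` lower Hessenberg matrix `M_k` with (1-indexed) entries
`(M_k)_{IJ} = z_{I-J+1}` for `J ≤ I`, `(M_k)_{I,I+1} = -I`, and `0` otherwise.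
Below `i j : Fin k` are 0-indexed, i.e. `I = i+1`, `J = j+1`. -/
def Mhess (k : ℕ) : Matrix (Fin k) (Fin k) (Polynomial Rt) :=
  Matrix.of fun i j =>
    if (j : ℕ) ≤ (i : ℕ) then zj ((i : ℕ) - (j : ℕ) + 1)
    else if (j : ℕ) = (i : ℕ) + 1 then -(((i : ℕ) + 1 : ℕ) : Polynomial Rt)
    else 0

/-- `x₀ := 1` and `x_k := (1/k!) det M_k` for `k ≥ 1`; these satisfy
`x_k(z+1) - x_k(z) = x_{k-1}(z)` and have generating function
`exp (Σ_{k≥1} (-1)^{k+1} (z+t_k) u^k / k)`. -/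
def xpoly (k : ℕ) : Polynomial Rt :=
  if k = 0 then 1
  else C (MvPolynomial.C ((k.factorial : ℚ)⁻¹)) * (Mhess k).det

/-- `Q_n := det (x_{2i-1}(z+j-1))_{i,j=1,…,n}`, the Casoratian of
`x₁, x₃, …, x_{2n-1}` (here `i j : Fin n` are 0-indexed, so the row function is
`x_{2i+1}` and the `j`-th column is composition with `z + j`); `Q 0 = 1`. -/
def Qcas (n : ℕ) : Polynomial Rt :=
  Matrix.det (Matrix.of fun i j : Fin n =>
    (xpoly (2 * (i : ℕ) + 1)).comp (X + C ((j : ℕ) : Rt)))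

/-- `q_k := Q_k(0) ∈ R` (so `q 0 = 1 = q₀`). -/
def qval (k : ℕ) : Rt := (Qcas k).eval 0

end


/-!
Expanding the Hessenberg determinant along its last column gives Newton's identity
`k x_k = ∑_{j<k} z_{k-j} x_j`. Differentiating it, induction on `k` shows that `∂/∂t_v` acts on
the `x_k` as the shift `x_k ↦ ((-1)^(v+1)/v) x_{k-v}` (with `x_k ↦ 0` for `k < v`), the
coefficientwise form of `∂/∂t_v` multiplying the generating function by `(-1)^(v+1) u^v / v`.
For `v = 2p` this maps the row `x_{2i+1}` of the Casoratian to a multiple of the row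
`x_{2(i-p)+1}`, or to zero, so every term of the Leibniz expansion of `∂Q_n/∂t_{2p}` is a
determinant with two proportional rows.
-/

open scoped Nat

namespace Derivation

section Leibniz

variable {R A : Type*} [CommRing R] [CommRing A] [Algebra R A] (D : Derivation R A A)

theorem leibniz_prod {ι : Type*} [DecidableEq ι] (s : Finset ι) (f : ι → A) :
    D (∏ i ∈ s, f i) = ∑ i ∈ s, (∏ j ∈ s.erase i, f j) * D (f i) := by
  induction s using Finset.induction_on with
  | empty => simp
  | insert a s ha ih =>
    rw [Finset.prod_insert ha, leibniz, ih, Finset.sum_insert ha, Finset.erase_insert ha,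
      smul_eq_mul, smul_eq_mul, Finset.mul_sum, add_comm]
    congr 1
    refine Finset.sum_congr rfl fun i hi => ?_
    rw [Finset.erase_insert_of_ne (ne_of_mem_of_not_mem hi ha).symm,
      Finset.prod_insert fun h => ha (Finset.mem_of_mem_erase h)]
    ring

theorem map_det {n : Type*} [Fintype n] [DecidableEq n] (M : Matrix n n A) :
    D M.det = ∑ i, (M.updateRow i fun j => D (M i j)).det := by
  simp only [Matrix.det_apply, map_sum, Units.smul_def, map_zsmul, leibniz_prod]
  rw [Finset.sum_comm]
  refine Finset.sum_congr rfl fun σ _ => ?_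
  rw [← Finset.smul_sum]
  congr 1
  refine Fintype.sum_equiv σ _ _ fun c => ?_
  have hrow : (fun i => M.updateRow (σ c) (fun j => D (M (σ c) j)) (σ i) i)
      = Function.update (fun i => M (σ i) i) c (D (M (σ c) c)) := by
    funext i
    by_cases hi : i = c
    · subst hi; simp
    · simp [Matrix.updateRow_apply, σ.injective.ne hi, Function.update_of_ne hi]
  rw [hrow, Finset.prod_update_of_mem (Finset.mem_univ c), Finset.sdiff_singleton_eq_erase,
    mul_comm]

end Leibniz

section MapCoeffsSelf

variable {R A : Type*} [CommRing R] [CommRing A] [Algebra R A] (d : Derivation R A A)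

noncomputable def mapCoeffsSelf : Derivation R A[X] A[X] :=
  PolynomialModule.equivPolynomialSelf.compDer d.mapCoeffs

@[simp]
theorem coeff_mapCoeffsSelf (p : A[X]) (i : ℕ) :
    (d.mapCoeffsSelf p).coeff i = d (p.coeff i) := rfl

@[simp]
theorem mapCoeffsSelf_C (a : A) : d.mapCoeffsSelf (C a) = C (d a) := by
  ext i; simp [coeff_C, apply_ite d]

@[simp]
theorem mapCoeffsSelf_X : d.mapCoeffsSelf (X : A[X]) = 0 := by
  ext i; simp [coeff_X, apply_ite d]

theorem mapCoeffsSelf_comp {q : A[X]} (hq : d.mapCoeffsSelf q = 0) (p : A[X]) :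
    d.mapCoeffsSelf (p.comp q) = (d.mapCoeffsSelf p).comp q := by
  induction p using Polynomial.induction_on' with
  | add f g hf hg => simp only [add_comp, map_add, hf, hg]
  | monomial n a =>
    simp only [← C_mul_X_pow_eq_monomial, mul_comp, C_comp, pow_comp, X_comp, leibniz,
      leibniz_pow, hq, smul_eq_mul, mul_zero, nsmul_zero, mapCoeffsSelf_C, zero_add,
      mapCoeffsSelf_X, X_pow_mul_C]
    ring

end MapCoeffsSelf

end Derivation

theorem det_Mhess (k : ℕ) : (Mhess k).det = (k ! : Rt[X]) * xpoly k := by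
  rcases Nat.eq_zero_or_pos k with rfl | hk
  · simp [xpoly]
  · rw [xpoly, if_neg hk.ne', ← mul_assoc, ← map_natCast C, ← map_natCast MvPolynomial.C,
      ← map_mul, ← map_mul, mul_inv_cancel₀ (by positivity), map_one, map_one, one_mul]

theorem Mhess_castSucc (k : ℕ) (i j : Fin (k + 1)) :
    Mhess (k + 2) i.castSucc j.castSucc = Mhess (k + 1) i j := rfl

theorem updateRow_last_Mhess_submatrix_castSucc (k : ℕ) (v : Fin (k + 2) → Rt[X]) :
    ((Mhess (k + 2)).updateRow (Fin.last (k + 1)) v).submatrix Fin.castSucc Fin.castSucc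
      = Mhess (k + 1) :=
  Matrix.ext fun i j => by simp [Matrix.updateRow_apply, Fin.castSucc_ne_last, Mhess_castSucc]

theorem updateRow_last_Mhess_submatrix_succAbove (k : ℕ) (v : Fin (k + 2) → Rt[X]) :
    ((Mhess (k + 2)).updateRow (Fin.last (k + 1)) v).submatrix (Fin.last k).castSucc.succAbove
      Fin.castSucc = (Mhess (k + 1)).updateRow (Fin.last k) (v ∘ Fin.castSucc) := by
  refine Matrix.ext fun i j => ?_
  induction i using Fin.lastCases with
  | last => simp
  | cast i =>
    rw [Matrix.submatrix_apply, Fin.succAbove_of_castSucc_lt _ _ (by simp [Fin.lt_def])]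
    simp [Matrix.updateRow_apply, Fin.castSucc_ne_last, Mhess_castSucc]

/-- Expansion along the last column, which has only two nonzero entries. -/
theorem det_updateRow_last_Mhess (k : ℕ) (v : Fin (k + 1) → Rt[X]) :
    ((Mhess (k + 1)).updateRow (Fin.last k) v).det = (k ! : Rt[X]) * ∑ j, v j * xpoly j := by
  induction k with
  | zero => simp [xpoly]
  | succ k ih =>
    set N := (Mhess (k + 2)).updateRow (Fin.last (k + 1)) v
    have hzero : ∀ i : Fin k, N i.castSucc.castSucc (Fin.last (k + 1)) = 0 := by
      intro i
      have hi := i.isLt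
      simp only [N, Mhess, Matrix.updateRow_apply, Matrix.of_apply, Fin.ext_iff, Fin.val_last,
        Fin.val_castSucc]
      rw [if_neg (by omega), if_neg (by omega), if_neg (by omega)]
    have hsuper : N (Fin.last k).castSucc (Fin.last (k + 1)) = -((k + 1 : ℕ) : Rt[X]) := by
      simp [N, Mhess, Matrix.updateRow_apply, Fin.ext_iff]
    rw [Matrix.det_succ_column N (Fin.last (k + 1)), Fin.sum_univ_castSucc,
      Fin.sum_univ_castSucc, Finset.sum_eq_zero fun i _ => by rw [hzero i, mul_zero, zero_mul],
      hsuper, Fin.succAbove_last, updateRow_last_Mhess_submatrix_succAbove, ih,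
      updateRow_last_Mhess_submatrix_castSucc, det_Mhess, Fin.sum_univ_castSucc (n := k + 1)]
    simp only [N, Matrix.updateRow_self, Fin.val_last, Fin.val_castSucc, Function.comp_apply]
    rw [neg_one_pow_eq_pow_mod_two, neg_one_pow_eq_pow_mod_two (n := k + 1 + (k + 1)),
      show (k + (k + 1)) % 2 = 1 by omega, show (k + 1 + (k + 1)) % 2 = 0 by omega,
      Nat.factorial_succ]
    push_cast
    ring

theorem Mhess_last_row (k : ℕ) (j : Fin (k + 1)) :
    Mhess (k + 1) (Fin.last k) j = zj (k + 1 - j) := by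
  rw [Mhess, Matrix.of_apply, Fin.val_last, if_pos (Nat.lt_succ_iff.mp j.isLt)]
  congr 1
  omega

theorem newton_xpoly (k : ℕ) :
    (k : ℚ) • xpoly k = ∑ j ∈ Finset.range k, zj (k - j) * xpoly j := by
  cases k with
  | zero => simp
  | succ k =>
    have h := det_updateRow_last_Mhess k (Mhess (k + 1) (Fin.last k))
    simp only [Mhess_last_row] at h
    rw [Matrix.updateRow_eq_self, det_Mhess, Nat.factorial_succ, Nat.cast_mul,
      mul_comm _ (k ! : Rt[X]), mul_assoc,
      Fin.sum_univ_eq_sum_range (fun j => zj (k + 1 - j) * xpoly j)] at h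
    rw [Nat.cast_smul_eq_nsmul, nsmul_eq_mul,
      mul_left_cancel₀ (Nat.cast_ne_zero.mpr k.factorial_ne_zero) h]

local notation:max "∂[" v "]" => Derivation.mapCoeffsSelf (MvPolynomial.pderiv (R := ℚ) v)

theorem pderiv_zj (v i : ℕ) : ∂[v] (zj i) = if i = v then (-1) ^ (v + 1) else 0 := by
  by_cases h : i = v
  · subst h
    simp [zj, Derivation.leibniz, Derivation.leibniz_pow]
  · simp [zj, Derivation.leibniz, Derivation.leibniz_pow, MvPolynomial.pderiv_X, h]

theorem smul_pderiv_xpoly (v k : ℕ) :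
    (k : ℚ) • ∂[v] (xpoly k)
      = ∑ j ∈ Finset.range k, (zj (k - j) * ∂[v] (xpoly j) + xpoly j * ∂[v] (zj (k - j))) := by
  rw [← Derivation.map_smul, newton_xpoly, map_sum]
  refine Finset.sum_congr rfl fun j _ => ?_
  rw [Derivation.leibniz, smul_eq_mul, smul_eq_mul, add_comm]

theorem pderiv_xpoly_of_lt {v k : ℕ} (hk : k < v) : ∂[v] (xpoly k) = 0 := by
  induction k using Nat.strong_induction_on with
  | _ k ih =>
  rcases Nat.eq_zero_or_pos k with rfl | hk0
  · simp [xpoly]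
  · have h := smul_pderiv_xpoly v k
    rw [Finset.sum_eq_zero fun j hj => by
      rw [Finset.mem_range] at hj
      rw [ih j hj (by omega), pderiv_zj, if_neg (by omega), mul_zero, mul_zero, add_zero]] at h
    exact (smul_eq_zero.mp h).resolve_left (by positivity)

theorem pderiv_xpoly_add {v : ℕ} (hv : 1 ≤ v) (m : ℕ) :
    ∂[v] (xpoly (v + m)) = ((-1) ^ (v + 1) / v : ℚ) • xpoly m := by
  induction m using Nat.strong_induction_on with
  | _ m ih =>
  have h := smul_pderiv_xpoly v (v + m)
  rw [Finset.sum_add_distrib, Finset.sum_range_add,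
    Finset.sum_eq_zero fun j hj => by rw [pderiv_xpoly_of_lt (Finset.mem_range.mp hj), mul_zero],
    zero_add,
    Finset.sum_congr rfl fun i hi => by
      rw [ih i (Finset.mem_range.mp hi), show v + m - (v + i) = m - i by omega, mul_smul_comm],
    ← Finset.smul_sum, ← newton_xpoly,
    Finset.sum_eq_single_of_mem m (Finset.mem_range.mpr (by omega)) fun j _ hj => by
      rw [pderiv_zj, if_neg (by omega), mul_zero],
    Nat.add_sub_cancel_right, pderiv_zj, if_pos rfl] at h
  have hsign : xpoly m * (-1) ^ (v + 1) = ((-1 : ℚ) ^ (v + 1)) • xpoly m := by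
    rw [Algebra.smul_def, mul_comm, map_pow, map_neg, map_one]
  refine smul_right_injective Rt[X] (by positivity : ((v + m : ℕ) : ℚ) ≠ 0) ?_
  dsimp only
  rw [h, hsign, smul_smul, smul_smul, ← add_smul]
  congr 1
  push_cast
  field_simp
  ring

theorem pderiv_xpoly_comp_X_add_natCast (v k j : ℕ) :
    ∂[v] ((xpoly k).comp (X + C (j : Rt))) = (∂[v] (xpoly k)).comp (X + C (j : Rt)) :=
  Derivation.mapCoeffsSelf_comp _ (by simp) _

theorem pderiv_Qcas {p : ℕ} (hp : 1 ≤ p) (n : ℕ) : ∂[2 * p] (Qcas n) = 0 := by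
  rw [Qcas, Derivation.map_det]
  refine Finset.sum_eq_zero fun r _ => ?_
  simp only [Matrix.of_apply, pderiv_xpoly_comp_X_add_natCast]
  by_cases hr : (r : ℕ) < p
  · refine Matrix.det_eq_zero_of_row_eq_zero r fun j => ?_
    rw [Matrix.updateRow_self, pderiv_xpoly_of_lt (by omega), zero_comp]
  · set r' : Fin n := ⟨r - p, by omega⟩
    have hr' : (r' : ℕ) = r - p := rfl
    have hrow : (fun j : Fin n => (∂[2 * p] (xpoly (2 * r + 1))).comp (X + C (j : Rt)))
        = algebraMap ℚ Rt[X] ((-1) ^ (2 * p + 1) / (2 * p : ℕ)) • Matrix.of (fun i j : Fin n =>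
          (xpoly (2 * (i : ℕ) + 1)).comp (X + C ((j : ℕ) : Rt))) r' := by
      funext j
      rw [show 2 * (r : ℕ) + 1 = 2 * p + (2 * r' + 1) by omega,
        pderiv_xpoly_add (by omega), smul_comp, algebraMap_smul]
      rfl
    rw [hrow, Matrix.det_updateRow_smul, Matrix.det_updateRow_eq_zero, mul_zero]
    exact Fin.ne_of_val_ne (by omega)

/-- the Casoratian `Q_n` does not depend on the even-indexed
variables: the formal partial derivative of every coefficient of `Q_n` with
respect to `t_{2p}` vanishes, for all `n ≥ 1` and `p ≥ 1`. -/
theorem Qcas_indep_even_times :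
    ∀ n : ℕ, 1 ≤ n → ∀ p : ℕ, 1 ≤ p → ∀ m : ℕ,
      MvPolynomial.pderiv (2 * p) ((Qcas n).coeff m) = 0 := by
  intro n _ p hp m
  rw [← Derivation.coeff_mapCoeffsSelf, pderiv_Qcas hp, coeff_zero]
end

section
/- Define Q⁰₋₁ := 1, Q⁰₀ := 1 and, for n ≥ 1, Q⁰_n(z) := A_n^{−1} · z^{⌊(n+1)/2⌋} · ∏_{j=1}^{n−1} (z²−j²)^{⌊(n+1−j)/2⌋} ∈ ℚ[z], where A_n = ∏_{j=1}^n (2j−1)!!. Then the sequence Q⁰₋₁, Q⁰₀, Q⁰₁, … satisfies the difference Burchnall–Chaundy equation: for every n ≥ 0, Q⁰_{n+1}(z+1)·Q⁰_{n−1}(z) − Q⁰_{n+1}(z)·Q⁰_{n−1}(z+1) = Q⁰_n(z)·Q⁰_n(z+1); moreover Q⁰_n(0) = 0 for every n ≥ 1. -/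
open Polynomial

noncomputable section

/-- `A_n = ∏_{j=1}^n (2j-1)!!`. -/
def Adf (n : ℕ) : ℕ := ∏ j ∈ Finset.Icc 1 n, Nat.doubleFactorial (2 * j - 1)

/-- `Q⁰_n(z) = A_n⁻¹ z^⌊(n+1)/2⌋ ∏_{j=1}^{n-1} (z²-j²)^⌊(n+1-j)/2⌋` (for `n = 0`
this gives `Q⁰₀ = 1`). -/
def Q0 (n : ℕ) : Polynomial ℚ :=
  C ((Adf n : ℚ)⁻¹) * X ^ ((n + 1) / 2) *
    ∏ j ∈ Finset.Icc 1 (n - 1), (X ^ 2 - C ((j : ℚ) ^ 2)) ^ ((n + 1 - j) / 2)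

/-- auxiliary: `R_m(z) = z ∏_{j=1}^{m-1} (z² - j²)`. -/
def Rp (m : ℕ) : Polynomial ℚ :=
  X * ∏ j ∈ Finset.Icc 1 (m - 1), (X ^ 2 - C ((j : ℚ) ^ 2))

end

lemma Rp_one : Rp 1 = X := by simp [Rp]

lemma Rp_succ (m : ℕ) : Rp (m + 2) = Rp (m + 1) * (X ^ 2 - (C (m : ℚ) + 1) ^ 2) := by
  unfold Rp
  rw [show m + 2 - 1 = m + 1 from rfl, show m + 1 - 1 = m from rfl,
    Finset.prod_Icc_succ_top (by omega : 1 ≤ m + 1)]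
  simp only [Nat.cast_add, Nat.cast_one, map_pow, map_add, map_one]
  ring

lemma Rp_comp (m : ℕ) :
    (Rp (m + 2)).comp (X + 1)
      = (X + C (m : ℚ) + 2) * (X + C (m : ℚ) + 1) * Rp (m + 1) := by
  induction m with
  | zero =>
      have h2 : Rp 2 = Rp 1 * (X ^ 2 - (C ((0:ℕ) : ℚ) + 1) ^ 2) := Rp_succ 0
      rw [h2, Rp_one]
      simp only [mul_comp, sub_comp, pow_comp, X_comp, C_comp, add_comp, one_comp,
        Nat.cast_zero, map_zero, zero_comp]
      ring
  | succ k ih =>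
      rw [Rp_succ (k + 1)]
      simp only [mul_comp, sub_comp, pow_comp, X_comp, C_comp, add_comp, one_comp]
      rw [ih, Rp_succ k]
      simp only [Nat.cast_add, Nat.cast_one, map_add, map_one]
      ring

lemma Adf_rec (n : ℕ) :
    Adf (n + 2) = Adf n * (2 * n + 1).doubleFactorial * (2 * n + 3).doubleFactorial := by
  unfold Adf
  rw [Finset.prod_Icc_succ_top (by omega : 1 ≤ n + 2),
    Finset.prod_Icc_succ_top (by omega : 1 ≤ n + 1),
    show 2 * (n + 1) - 1 = 2 * n + 1 from by omega,
    show 2 * (n + 2) - 1 = 2 * n + 3 from by omega]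

lemma Q0_rec (n : ℕ) :
    Q0 (n + 2) = C ((((2 * n + 1).doubleFactorial * (2 * n + 3).doubleFactorial : ℕ) : ℚ))⁻¹
      * Q0 n * Rp (n + 2) := by
  unfold Q0 Rp
  rw [show n + 2 - 1 = n + 1 from rfl, show n + 2 + 1 = n + 3 from by omega]
  have hsub : Finset.Icc 1 (n - 1) ⊆ Finset.Icc 1 (n + 1) :=
    Finset.Icc_subset_Icc_right (by omega)
  have hext : (∏ j ∈ Finset.Icc 1 (n - 1), (X ^ 2 - C ((j : ℚ) ^ 2)) ^ ((n + 1 - j) / 2))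
      = ∏ j ∈ Finset.Icc 1 (n + 1), (X ^ 2 - C ((j : ℚ) ^ 2)) ^ ((n + 1 - j) / 2) := by
    apply Finset.prod_subset hsub
    intro j hj hj'
    simp only [Finset.mem_Icc] at hj hj'
    rw [show (n + 1 - j) / 2 = 0 from by omega, pow_zero]
  have hprod : (∏ j ∈ Finset.Icc 1 (n + 1), (X ^ 2 - C ((j : ℚ) ^ 2)) ^ ((n + 3 - j) / 2))
      = (∏ j ∈ Finset.Icc 1 (n + 1), (X ^ 2 - C ((j : ℚ) ^ 2)) ^ ((n + 1 - j) / 2))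
        * ∏ j ∈ Finset.Icc 1 (n + 1), (X ^ 2 - C ((j : ℚ) ^ 2)) := by
    rw [← Finset.prod_mul_distrib]
    apply Finset.prod_congr rfl
    intro j hj
    simp only [Finset.mem_Icc] at hj
    rw [← pow_succ, show (n + 1 - j) / 2 + 1 = (n + 3 - j) / 2 from by omega]
  rw [hprod, ← hext]
  have hc : ((Adf (n + 2) : ℚ))⁻¹
      = (((2 * n + 1).doubleFactorial * (2 * n + 3).doubleFactorial : ℕ) : ℚ)⁻¹
        * ((Adf n : ℚ))⁻¹ := by
    rw [Adf_rec n]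
    push_cast
    rw [mul_inv, mul_inv, mul_inv]
    ring
  rw [hc, map_mul, show (n + 3) / 2 = (n + 1) / 2 + 1 from by omega, pow_succ]
  ring

lemma Q0_zero : Q0 0 = 1 := by simp [Q0, Adf]

lemma Q0_one : Q0 1 = X := by
  unfold Q0 Adf
  norm_num [Nat.doubleFactorial]

/-- the key "square ratio" statement. -/
def Psq (k : ℕ) : Prop :=
  Q0 (k + 1) * (Q0 (k + 1)).comp (X + 1)
    = C ((((2 * k + 1).doubleFactorial : ℕ) : ℚ))⁻¹ ^ 2
      * (Q0 k * (Q0 k).comp (X + 1)) * ((X + C (k : ℚ) + 1) * Rp (k + 1))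

lemma Psq_zero : Psq 0 := by
  unfold Psq
  rw [Q0_zero, Q0_one, Rp_one]
  norm_num [Nat.doubleFactorial]
  ring

lemma Psq_one : Psq 1 := by
  unfold Psq
  rw [Q0_rec 0, Q0_zero, Q0_one]
  have h2 : Rp 2 = Rp 1 * (X ^ 2 - (C ((0:ℕ) : ℚ) + 1) ^ 2) := Rp_succ 0
  have hc2 : (Rp 2).comp (X + 1) = (X + C ((0:ℕ) : ℚ) + 2) * (X + C ((0:ℕ) : ℚ) + 1) * Rp 1 :=
    Rp_comp 0
  simp only [mul_comp, C_comp, one_comp, X_comp] at *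
  rw [hc2, h2, Rp_one]
  norm_num [Nat.doubleFactorial]
  ring

lemma Psq_step (k : ℕ) (ih : Psq k) : Psq (k + 2) := by
  unfold Psq at ih ⊢
  rw [show 2 * (k + 2) + 1 = 2 * k + 5 from by omega]
  have hA1 : Q0 (k + 3)
      = C ((((2 * k + 3).doubleFactorial * (2 * k + 5).doubleFactorial : ℕ) : ℚ))⁻¹
        * Q0 (k + 1) * Rp (k + 3) := by
    have := Q0_rec (k + 1)
    rwa [show 2 * (k + 1) + 1 = 2 * k + 3 from by omega,
      show 2 * (k + 1) + 3 = 2 * k + 5 from by omega] at this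
  rw [show k + 2 + 1 = k + 3 from rfl, hA1, Q0_rec k]
  simp only [mul_comp, C_comp]
  rw [Rp_comp (k + 1), Rp_succ (k + 1), Rp_comp k]
  linear_combination (norm := (push_cast; simp only [map_mul, mul_inv, map_add, map_one,
      map_ofNat, Nat.cast_add, Nat.cast_one, Nat.cast_mul, Nat.cast_ofNat]; ring1))
    (C ((((2 * k + 3).doubleFactorial * (2 * k + 5).doubleFactorial : ℕ) : ℚ))⁻¹ ^ 2
      * Rp (k + 2) ^ 2 * ((X ^ 2 - (C ((k : ℚ) + 1) + 1) ^ 2)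
      * (X + C (k : ℚ) + 3) * (X + C (k : ℚ) + 2))) * ih

lemma Psq_all (k : ℕ) : Psq k := by
  have h : ∀ m : ℕ, Psq m ∧ Psq (m + 1) := by
    intro m
    induction m with
    | zero => exact ⟨Psq_zero, Psq_one⟩
    | succ l ih => exact ⟨ih.2, Psq_step l ih.1⟩
  exact (h k).1

/-- the polynomials `Q⁰₋₁ = Q⁰₀ = 1, Q⁰₁, Q⁰₂, …` satisfy the
difference Burchnall–Chaundy equation, and `Q⁰_n(0) = 0` for `n ≥ 1`.
Indexing convention: `Qe m` below is `Q⁰_{m-1}` of the paper, so `Qe 0 = Q⁰₋₁ = 1`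
and `Qe (n+1) = Q0 n`. -/
theorem Q0_satisfies_dBCh :
    ∀ Qe : ℕ → Polynomial ℚ,
      Qe 0 = 1 → (∀ n : ℕ, Qe (n + 1) = Q0 n) →
      (∀ n : ℕ,
        (Qe (n + 2)).comp (X + 1) * Qe n - Qe (n + 2) * (Qe n).comp (X + 1)
          = Qe (n + 1) * (Qe (n + 1)).comp (X + 1)) ∧
      (∀ n : ℕ, 1 ≤ n → (Qe (n + 1)).eval 0 = 0) := by
  intro Qe h0 hQ
  constructor
  · intro n
    match n with
    | 0 =>
        rw [hQ 1, hQ 0, h0, Q0_one, Q0_zero]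
        simp [X_comp, one_comp]
    | (k + 1) =>
        rw [hQ (k + 2), hQ (k + 1), hQ k]
        rw [Q0_rec k, Psq_all k]
        simp only [mul_comp, C_comp]
        rw [Rp_comp k, Rp_succ k]
        have hd : ((2 * k + 3).doubleFactorial : ℕ)
            = (2 * k + 3) * (2 * k + 1).doubleFactorial := by
          rw [show 2 * k + 3 = 2 * k + 1 + 2 from by omega, Nat.doubleFactorial_add_two]
        have h1 : (((2 * k + 1).doubleFactorial : ℕ) : ℚ) ≠ 0 :=
          Nat.cast_ne_zero.mpr (Nat.doubleFactorial_pos _).ne'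
        have hq : ((((2 * k + 3).doubleFactorial : ℕ) : ℚ))⁻¹ * (2 * (k : ℚ) + 3)
            = ((((2 * k + 1).doubleFactorial : ℕ) : ℚ))⁻¹ := by
          rw [hd]
          push_cast
          rw [mul_inv]
          field_simp
        have hC := congrArg C hq
        linear_combination (norm := (push_cast; simp only [map_mul, mul_inv, map_add, map_one,
            map_ofNat, Nat.cast_add, Nat.cast_one, Nat.cast_mul, Nat.cast_ofNat]; ring1))
          (C ((((2 * k + 1).doubleFactorial : ℕ) : ℚ))⁻¹ * Q0 k * (Q0 k).comp (X + 1)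
            * Rp (k + 1) * (X + C (k : ℚ) + 1)) * hC
  · intro n hn
    rw [hQ n]
    have h : (n + 1) / 2 ≠ 0 := by omega
    simp [Q0, zero_pow h]
end

section
/- With Q⁰_n ∈ ℚ[z] defined by Q⁰₀ := 1 and Q⁰_n(z) := A_n^{−1} · z^{⌊(n+1)/2⌋} · ∏_{j=1}^{n−1} (z²−j²)^{⌊(n+1−j)/2⌋} for n ≥ 1, the recurrence (2n−1)!! · Q⁰_n(z) = (∏_{j=1}^{n} (z + n + 1 − 2j)) · Q⁰_{n−1}(z) holds for every n ≥ 1. -/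
open Polynomial

noncomputable section Aux

/-- The polynomial (monic) part of `Q0 n`. -/
def Faux (n : ℕ) : Polynomial ℚ :=
  X ^ ((n + 1) / 2) *
    ∏ j ∈ Finset.Icc 1 (n - 1), (X ^ 2 - C ((j : ℚ) ^ 2)) ^ ((n + 1 - j) / 2)

/-- The product of linear factors appearing in the recurrence. -/
def Paux (n : ℕ) : Polynomial ℚ :=
  ∏ j ∈ Finset.Icc 1 n, (X + C ((n : ℚ) + 1 - 2 * (j : ℚ)))

lemma Paux_eq (n : ℕ) :
    Paux n = ∏ i ∈ Finset.range n, (X + C ((n : ℚ) - 1 - 2 * (i : ℚ))) := by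
  rw [Paux, ← Finset.Ico_add_one_right_eq_Icc, Finset.prod_Ico_eq_prod_range]
  have h : n + 1 - 1 = n := rfl
  rw [h]
  refine Finset.prod_congr rfl fun i _ => ?_
  congr 1
  push_cast
  ring

lemma Paux_step (n : ℕ) :
    Paux (n + 2) = (X ^ 2 - C (((n : ℚ) + 1) ^ 2)) * Paux n := by
  rw [Paux_eq, Paux_eq, Finset.prod_range_succ, Finset.prod_range_succ']
  have h1 : ∀ i ∈ Finset.range n,
      (X + C (((n + 2 : ℕ) : ℚ) - 1 - 2 * ((i + 1 : ℕ) : ℚ)))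
        = (X + C ((n : ℚ) - 1 - 2 * (i : ℚ))) := by
    intro i _
    congr 1
    push_cast
    ring
  have h0 : ((n + 2 : ℕ) : ℚ) - 1 - 2 * ((0 : ℕ) : ℚ) = (n : ℚ) + 1 := by push_cast; ring
  have hn1 : ((n + 2 : ℕ) : ℚ) - 1 - 2 * ((n + 1 : ℕ) : ℚ) = -((n : ℚ) + 1) := by
    push_cast; ring
  rw [Finset.prod_congr rfl h1, h0, hn1, map_neg]
  have h2 : X ^ 2 - C (((n : ℚ) + 1) ^ 2) = (X + C ((n : ℚ) + 1)) * (X - C ((n : ℚ) + 1)) := by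
    rw [map_pow]
    ring
  rw [h2]
  ring

lemma Faux_step (n : ℕ) :
    Faux (n + 2) = X * (∏ j ∈ Finset.Icc 1 (n + 1), (X ^ 2 - C ((j : ℚ) ^ 2))) * Faux n := by
  unfold Faux
  have h1 : (n + 2 + 1) / 2 = (n + 1) / 2 + 1 := by omega
  have h2 : n + 2 - 1 = n + 1 := rfl
  rw [h1, h2, pow_succ]
  have h3 : ∀ j ∈ Finset.Icc 1 (n + 1),
      (X ^ 2 - C ((j : ℚ) ^ 2)) ^ ((n + 2 + 1 - j) / 2)
        = (X ^ 2 - C ((j : ℚ) ^ 2)) ^ ((n + 1 - j) / 2) * (X ^ 2 - C ((j : ℚ) ^ 2)) := by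
    intro j hj
    rw [← pow_succ]
    congr 1
    simp only [Finset.mem_Icc] at hj
    omega
  rw [Finset.prod_congr rfl h3, Finset.prod_mul_distrib]
  have h4 : ∏ j ∈ Finset.Icc 1 (n + 1), (X ^ 2 - C ((j : ℚ) ^ 2)) ^ ((n + 1 - j) / 2)
      = ∏ j ∈ Finset.Icc 1 (n - 1), (X ^ 2 - C ((j : ℚ) ^ 2)) ^ ((n + 1 - j) / 2) := by
    symm
    apply Finset.prod_subset
    · intro j hj
      simp only [Finset.mem_Icc] at *
      omega
    · intro j hj hj'
      simp only [Finset.mem_Icc] at hj hj'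
      have : (n + 1 - j) / 2 = 0 := by omega
      rw [this, pow_zero]
  rw [h4]
  ring

lemma key : ∀ m : ℕ, Faux (m + 1) = Paux (m + 1) * Faux m := by
  intro m
  induction m using Nat.twoStepInduction with
  | zero =>
    have h : Paux 1 = X := by
      rw [Paux, Finset.Icc_self, Finset.prod_singleton]
      norm_num
    simp [Faux, h]
  | one =>
    have h2 : Paux 2 = (X + 1) * (X - 1) := by
      rw [Paux, show (2 : ℕ) = 1 + 1 from rfl, Finset.prod_Icc_succ_top (by norm_num),
        Finset.Icc_self, Finset.prod_singleton]
      have e1 : ((2 : ℕ) : ℚ) + 1 - 2 * ((1 : ℕ) : ℚ) = 1 := by norm_num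
      have e2 : ((2 : ℕ) : ℚ) + 1 - 2 * ((2 : ℕ) : ℚ) = -1 := by norm_num
      rw [e1, e2, C_1, map_neg, C_1]
      ring
    have h1 : Faux 1 = X := by simp [Faux]
    have h3 : Faux 2 = X * (X ^ 2 - 1) := by
      rw [Faux]
      norm_num [Finset.Icc_self]
    rw [h3, h2, h1]
    ring
  | more m ih _ =>
    have e1 : m + 2 + 1 = m + 1 + 2 := rfl
    rw [e1, Faux_step (m + 1), Paux_step (m + 1), Faux_step m, ih]
    have e2 : ∏ j ∈ Finset.Icc 1 (m + 2), (X ^ 2 - C ((j : ℚ) ^ 2))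
        = (∏ j ∈ Finset.Icc 1 (m + 1), (X ^ 2 - C ((j : ℚ) ^ 2)))
            * (X ^ 2 - C ((((m + 1 : ℕ) : ℚ) + 1) ^ 2)) := by
      rw [Finset.prod_Icc_succ_top (by omega : 1 ≤ m + 2)]
      congr 3
      push_cast
      ring
    rw [e2]
    ring

lemma Adf_succ (m : ℕ) :
    Adf (m + 1) = Adf m * Nat.doubleFactorial (2 * (m + 1) - 1) :=
  Finset.prod_Icc_succ_top (Nat.succ_le_succ (Nat.zero_le m)) _

lemma Adf_pos (n : ℕ) : 0 < Adf n := by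
  apply Finset.prod_pos
  intro j _
  exact Nat.doubleFactorial_pos _

end Aux

/-- the recurrence
`(2n-1)!! Q⁰_n(z) = (∏_{j=1}^n (z + n + 1 - 2j)) Q⁰_{n-1}(z)` for `n ≥ 1`. -/
theorem Q0_recurrence :
    ∀ n : ℕ, 1 ≤ n →
      C ((Nat.doubleFactorial (2 * n - 1) : ℚ)) * Q0 n
        = (∏ j ∈ Finset.Icc 1 n, (X + C ((n : ℚ) + 1 - 2 * (j : ℚ)))) * Q0 (n - 1) := by
  intro n hn
  obtain ⟨m, rfl⟩ : ∃ m, n = m + 1 := ⟨n - 1, by omega⟩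
  have hq1 : Q0 (m + 1) = C ((Adf (m + 1) : ℚ)⁻¹) * Faux (m + 1) := by
    rw [Q0, Faux, mul_assoc]
  have hq0 : Q0 (m + 1 - 1) = C ((Adf m : ℚ)⁻¹) * Faux m := by
    simp only [Nat.add_sub_cancel]
    rw [Q0, Faux, mul_assoc]
  have hP : (∏ j ∈ Finset.Icc 1 (m + 1), (X + C (((m + 1 : ℕ) : ℚ) + 1 - 2 * (j : ℚ))))
      = Paux (m + 1) := rfl
  rw [hq1, hq0, hP, key m]
  have hd : (Nat.doubleFactorial (2 * (m + 1) - 1) : ℚ) ≠ 0 := by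
    exact_mod_cast (Nat.doubleFactorial_pos _).ne'
  have hb : (Adf m : ℚ) ≠ 0 := by
    exact_mod_cast (Adf_pos m).ne'
  have hA : (Adf (m + 1) : ℚ)
      = (Adf m : ℚ) * (Nat.doubleFactorial (2 * (m + 1) - 1) : ℚ) := by
    rw [Adf_succ]; push_cast; ring
  have hc : (Nat.doubleFactorial (2 * (m + 1) - 1) : ℚ) * (Adf (m + 1) : ℚ)⁻¹
      = (Adf m : ℚ)⁻¹ := by
    rw [hA]
    field_simp
  calc C ((Nat.doubleFactorial (2 * (m + 1) - 1) : ℚ)) *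
        (C ((Adf (m + 1) : ℚ)⁻¹) * (Paux (m + 1) * Faux m))
      = C ((Nat.doubleFactorial (2 * (m + 1) - 1) : ℚ) * (Adf (m + 1) : ℚ)⁻¹)
          * (Paux (m + 1) * Faux m) := by rw [map_mul]; ring
    _ = C ((Adf m : ℚ)⁻¹) * (Paux (m + 1) * Faux m) := by rw [hc]
    _ = Paux (m + 1) * (C ((Adf m : ℚ)⁻¹) * Faux m) := by ring
end

section
/- Symmetric Casoratian formula: for n ≥ 1, let f_i(x) := x^{2i−1}/(2i−1)! and consider the n×n matrix over ℚ[z] whose (i,j) entry is f_i(z + n + 1 − 2j) = (z + n + 1 − 2j)^{2i−1}/(2i−1)!. Then det( f_i(z+n+1−2j) )_{i,j=1,…,n} = (−2)^{n(n−1)/2} · Q⁰_n(z), where Q⁰_n(z) := A_n^{−1} · z^{⌊(n+1)/2⌋} · ∏_{j=1}^{n−1} (z²−j²)^{⌊(n+1−j)/2⌋} and A_n = ∏_{j=1}^n (2j−1)!!. -/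
/-!
Put `V_j = z + n - 1 - 2j`. The `(i, j)` entry is `V_j (V_j²)^i / (2i+1)!`, so the determinant is
`∏ 1/(2i+1)! · ∏ V_j` times the Vandermonde determinant of the `V_j²`, and
`V_j² - V_i² = 4(i - j)(z + n - 1 - i - j)`. The scalar factors give
`(-4)^{n(n-1)/2} ∏ i! / ∏ (2i+1)! = (-2)^{n(n-1)/2} / A_n` because `(2i+1)! = (2i+1)!! 2^i i!`.
The linear factors are `z + n - 1 - i - j` over `i ≤ j`; with `k = n - 1 - j` they become
`z + k - i` over the triangle `i + k < n`, whose antidiagonal `i + k = d` contributes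
`∏_{i ≤ d} (z + d - 2i)`. Two consecutive antidiagonals together give `z ∏_{m ≤ d+1} (z² - m²)`,
and a two-step induction on `n` produces the exponents `⌊(n + 1 - m)/2⌋` of `Q⁰_n`.
-/

open Polynomial

open Finset Nat

lemma Matrix.det_of_mul_pow_two_mul_add_one {R : Type*} [CommRing R] {n : ℕ} (a v : Fin n → R) :
    Matrix.det (Matrix.of fun i j : Fin n => a i * v j ^ (2 * (i : ℕ) + 1))
      = (∏ i, a i) * (∏ j, v j) * ∏ i, ∏ j ∈ Ioi i, (v j ^ 2 - v i ^ 2) := by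
  have hodd : (Matrix.of fun i j : Fin n => a i * v j ^ (2 * (i : ℕ) + 1))
      = Matrix.of fun i j => a i *
          Matrix.of (fun i j => v j * (Matrix.vandermonde fun j => v j ^ 2).transpose i j) i j := by
    ext i j
    simp only [Matrix.of_apply, Matrix.transpose_apply, Matrix.vandermonde_apply]
    ring
  rw [hodd, Matrix.det_mul_column, Matrix.det_mul_row, Matrix.det_transpose,
    Matrix.det_vandermonde, mul_assoc]

lemma X_add_C_sub_two_mul_sq_sub_sq {R : Type*} [CommRing R] (c x y : R) :
    (X + C (c - 2 * y)) ^ 2 - (X + C (c - 2 * x)) ^ 2 = C (4 * (x - y)) * (X + C (c - x - y)) := by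
  simp only [map_sub, map_mul, map_ofNat]
  ring

section Products

variable {M : Type*} [CommMonoid M]

lemma prod_fin_Ioi_const (n : ℕ) (c : M) :
    ∏ i : Fin n, ∏ _j ∈ Ioi i, c = c ^ (n * (n - 1) / 2) := by
  simp only [prod_const, Fin.card_Ioi, prod_pow_eq_pow_sum]
  rw [Fin.sum_univ_eq_sum_range (fun i => n - 1 - i), sum_range_reflect (fun i => i),
    sum_range_id]

lemma prod_fin_Ici_eq_prod_range_Ico (n : ℕ) (f : ℕ → ℕ → M) :
    ∏ i : Fin n, ∏ j ∈ Ici i, f i j = ∏ i ∈ range n, ∏ j ∈ Ico i n, f i j := by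
  rw [← Fin.prod_univ_eq_prod_range (fun i => ∏ j ∈ Ico i n, f i j)]
  refine prod_congr rfl fun i _ => ?_
  rw [← Fin.map_valEmbedding_Ici, prod_map]
  rfl

end Products

section Constant

variable {R : Type*} [CommRing R]

lemma prod_fin_Ioi_sub (n : ℕ) :
    ∏ i : Fin n, ∏ j ∈ Ioi i, ((j : R) - i) = ∏ i ∈ range n, (i ! : R) := by
  cases n with
  | zero => simp
  | succ m =>
    rw [← Matrix.det_vandermonde, Matrix.det_vandermonde_id_eq_superFactorial,
      ← prod_range_succ_factorial]
    push_cast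
    rfl

lemma Adf_eq_prod_range (n : ℕ) : Adf n = ∏ i ∈ range n, (2 * i + 1)‼ := by
  rw [Adf, ← Ico_add_one_right_eq_Icc, prod_Ico_eq_prod_range, Nat.add_sub_cancel]
  exact prod_congr rfl fun i _ => by rw [show 2 * (1 + i) - 1 = 2 * i + 1 by omega]

lemma prod_factorial_two_mul_add_one (n : ℕ) :
    ∏ i ∈ range n, (2 * i + 1)! = 2 ^ (n * (n - 1) / 2) * (∏ i ∈ range n, i !) * Adf n := by
  simp only [factorial_eq_mul_doubleFactorial, doubleFactorial_two_mul, prod_mul_distrib]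
  rw [prod_pow_eq_pow_sum, sum_range_id, Adf_eq_prod_range]
  ring

lemma casoratian_constant (n : ℕ) :
    (∏ i : Fin n, (((2 * (i : ℕ) + 1)! : ℚ))⁻¹) * ∏ i : Fin n, ∏ j ∈ Ioi i, (4 * ((i : ℚ) - j))
      = (-2) ^ (n * (n - 1) / 2) * (Adf n : ℚ)⁻¹ := by
  have h4 : ∀ i j : Fin n, 4 * ((i : ℚ) - j) = -4 * ((j : ℚ) - i) := fun i j => by ring
  simp only [h4, prod_mul_distrib, prod_fin_Ioi_const, prod_fin_Ioi_sub, prod_inv_distrib]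
  rw [Fin.prod_univ_eq_prod_range (fun i => (((2 * i + 1)! : ℚ))), ← Nat.cast_prod,
    prod_factorial_two_mul_add_one]
  have hA : (Adf n : ℚ) ≠ 0 := by
    simp [Adf_eq_prod_range, prod_eq_zero_iff, (doubleFactorial_pos _).ne']
  have hF : (∏ i ∈ range n, (i ! : ℚ)) ≠ 0 := by
    simp [prod_eq_zero_iff, factorial_ne_zero]
  push_cast
  rw [show (-4 : ℚ) = -2 * 2 by norm_num, mul_pow]
  field_simp

end Constant

section LinearFactors

variable {R : Type*} [CommRing R]

noncomputable def centeredProd (d : ℕ) : R[X] := ∏ k ∈ range (d + 1), (X + C ((d : R) - 2 * k))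

lemma centeredProd_add_two (d : ℕ) :
    (centeredProd (d + 2) : R[X]) = (X ^ 2 - C (((d + 2 : ℕ) : R) ^ 2)) * centeredProd d := by
  rw [centeredProd, prod_range_succ, prod_range_succ', centeredProd]
  have hmid : ∀ k ∈ range (d + 1), (X + C (((d + 2 : ℕ) : R) - 2 * ((k + 1 : ℕ) : R)))
      = X + C ((d : R) - 2 * k) := fun k _ => by push_cast; ring_nf
  rw [prod_congr rfl hmid]
  simp only [map_sub, map_mul, map_pow, map_natCast, map_ofNat]
  push_cast
  ring

lemma centeredProd_mul_centeredProd_succ (d : ℕ) :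
    (centeredProd d * centeredProd (d + 1) : R[X])
      = X * ∏ m ∈ Icc 1 (d + 1), (X ^ 2 - C ((m : R) ^ 2)) := by
  induction d with
  | zero =>
    simp only [centeredProd, prod_range_succ, prod_range_zero, Icc_self, prod_singleton]
    simp only [map_sub, map_mul, map_pow, map_natCast, map_ofNat]
    push_cast
    ring
  | succ d ih =>
    rw [prod_Icc_succ_top (by omega), ← mul_assoc, ← ih, centeredProd_add_two]
    ring

lemma prod_range_centeredProd (n : ℕ) :
    ∏ d ∈ range n, (centeredProd d : R[X])
      = X ^ ((n + 1) / 2) * ∏ m ∈ Icc 1 (n - 1), (X ^ 2 - C ((m : R) ^ 2)) ^ ((n + 1 - m) / 2) := by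
  induction n using Nat.twoStepInduction with
  | zero => simp
  | one => simp [centeredProd]
  | more n ih _ =>
    have hwiden : ∏ m ∈ Icc 1 (n - 1), (X ^ 2 - C ((m : R) ^ 2)) ^ ((n + 1 - m) / 2)
        = ∏ m ∈ Icc 1 (n + 1), (X ^ 2 - C ((m : R) ^ 2)) ^ ((n + 1 - m) / 2) :=
      prod_subset (Icc_subset_Icc_right (by omega)) fun m hm hm' => by
        simp only [mem_Icc] at hm hm'
        rw [show (n + 1 - m) / 2 = 0 by omega, pow_zero]
    have hexp : ∀ m ∈ Icc 1 (n + 1), (X ^ 2 - C ((m : R) ^ 2)) ^ ((n + 2 + 1 - m) / 2)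
        = (X ^ 2 - C ((m : R) ^ 2)) ^ ((n + 1 - m) / 2) * (X ^ 2 - C ((m : R) ^ 2)) :=
      fun m hm => by
        rw [← pow_succ]; congr 1; simp only [mem_Icc] at hm; omega
    rw [prod_range_succ, prod_range_succ, mul_assoc, centeredProd_mul_centeredProd_succ, ih,
      hwiden, show n + 2 - 1 = n + 1 by omega, prod_congr rfl hexp, prod_mul_distrib,
      show (n + 2 + 1) / 2 = (n + 1) / 2 + 1 by omega]
    ring

lemma prod_pairs_eq_prod_range_centeredProd (n : ℕ) :
    (∏ j : Fin n, (X + C ((n : R) - 1 - 2 * (j : ℕ))))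
        * ∏ i : Fin n, ∏ j ∈ Ioi i, (X + C ((n : R) - 1 - (i : ℕ) - (j : ℕ)))
      = ∏ d ∈ range n, centeredProd d := by
  have hdiag : ∀ i : Fin n, (X + C ((n : R) - 1 - 2 * (i : ℕ)))
        * ∏ j ∈ Ioi i, (X + C ((n : R) - 1 - (i : ℕ) - (j : ℕ)))
      = ∏ j ∈ Ici i, (X + C ((n : R) - 1 - (i : ℕ) - (j : ℕ))) := fun i => by
    rw [← Ioi_insert, prod_insert (by simp), two_mul, sub_add_eq_sub_sub]
  have hflip : ∀ i ∈ range n, ∏ j ∈ Ico i n, (X + C ((n : R) - 1 - i - j))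
      = ∏ k ∈ range (n - i), (X + C ((k : R) - i)) := fun i hi => by
    rw [prod_Ico_eq_prod_range, ← prod_range_reflect]
    refine prod_congr rfl fun k hk => ?_
    simp only [mem_range] at hi hk
    rw [Nat.cast_add, Nat.cast_sub (by omega), Nat.cast_sub (by omega), Nat.cast_sub (by omega)]
    ring_nf
  rw [← prod_mul_distrib, prod_congr rfl fun i _ => hdiag i,
    prod_fin_Ici_eq_prod_range_Ico n fun i j => X + C ((n : R) - 1 - i - j),
    prod_congr rfl hflip, ← prod_range_diag_flip]
  refine prod_congr rfl fun d _ => prod_congr rfl fun k hk => ?_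
  rw [Nat.cast_sub (Nat.lt_succ_iff.1 (mem_range.1 hk))]
  ring_nf

end LinearFactors

/-- The indices `i j : Fin n` are 0-based, so the entry is `(z + n - 1 - 2j)^{2i+1} / (2i+1)!`. -/
theorem symmetric_casoratian_formula_general (n : ℕ) :
    Matrix.det (Matrix.of fun i j : Fin n =>
        C ((((2 * (i : ℕ) + 1).factorial : ℚ))⁻¹)
          * (X + C ((n : ℚ) - 1 - 2 * ((j : ℕ) : ℚ))) ^ (2 * (i : ℕ) + 1))
      = (-2 : Polynomial ℚ) ^ (n * (n - 1) / 2) * Q0 n := by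
  simp only [Matrix.det_of_mul_pow_two_mul_add_one, X_add_C_sub_two_mul_sq_sub_sq,
    prod_mul_distrib]
  calc _ = C ((∏ i : Fin n, (((2 * (i : ℕ) + 1)! : ℚ))⁻¹)
              * ∏ i : Fin n, ∏ j ∈ Ioi i, (4 * ((i : ℚ) - j)))
          * ((∏ j : Fin n, (X + C ((n : ℚ) - 1 - 2 * (j : ℕ))))
            * ∏ i : Fin n, ∏ j ∈ Ioi i, (X + C ((n : ℚ) - 1 - (i : ℕ) - (j : ℕ)))) := by
        simp only [map_mul, map_prod]
        ring
    _ = _ := by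
        rw [casoratian_constant, prod_pairs_eq_prod_range_centeredProd, prod_range_centeredProd,
          Q0, map_mul, map_pow, map_neg, map_ofNat]
        ring

/-- symmetric Casoratian formula: for `f_i(x) = x^{2i-1}/(2i-1)!`,
`det (f_i(z + n + 1 - 2j))_{i,j=1,…,n} = (-2)^{n(n-1)/2} Q⁰_n(z)`.
Here `i j : Fin n` are 0-indexed (`I = i+1`, `J = j+1`), so the entry is
`(z + n - 1 - 2j)^{2i+1} / (2i+1)!`. -/
theorem symmetric_casoratian_formula (n : ℕ) (hn : 1 ≤ n) :
    Matrix.det (Matrix.of fun i j : Fin n =>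
        C ((((2 * (i : ℕ) + 1).factorial : ℚ))⁻¹)
          * (X + C ((n : ℚ) - 1 - 2 * ((j : ℕ) : ℚ))) ^ (2 * (i : ℕ) + 1))
      = (-2 : Polynomial ℚ) ^ (n * (n - 1) / 2) * Q0 n :=
  symmetric_casoratian_formula_general n
end

section
/- With q_k ∈ R = ℚ[t₁, t₂, t₃, …] defined as the value at z = 0 of the Casoratian Q_k of x₁, x₃, …, x_{2k−1}, the polynomial q_k is weighted homogeneous of weight k(k+1)/2 with respect to the weighting w(t_j) = j: every monomial ∏ t_j^{b_j} occurring in q_k satisfies Σ j·b_j = k(k+1)/2. -/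
open Polynomial

/-!
Newton's identities `k x_k = Σ_{i=1}^k z_i x_{k-i}` hold for the `x_k`: the vector `(x_0, …, x_k)`
is annihilated by all rows of `M_{k+1}` but the last, so Cramer's rule computes `det M_{k+1}`.
Hence `Σ x_k u^k` solves `F' = (Σ z_{i+1} u^i) F`, and shifting `z` by `1` adds `1/(1+u)` to the
coefficient series, so it multiplies `F` by `1 + u`. Consequently
`x_m(j) = Σ_a C(j,a) p_{m-a}` with `p_m = x_m(0)`, and `p_m` has weight `m` since the `z_i(0)`
are `±t_i`. The Casoratian at `z = 0` is thus `det (F B)` with `F_{ia} = p_{2i+1-a}` and `B` the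
unitriangular Pascal matrix, and every term of `det F` has weight `Σ (2i+1) - Σ a = k(k+1)/2`.
-/

open Finset (range sum_congr)
open Finset.HasAntidiagonal (antidiagonal mem_antidiagonal)
open Matrix
open scoped Nat

section NewtonSequence

variable {A : Type*} [CommRing A] [Algebra ℚ A]

/-- Complete homogeneous sums from the power sums `c` by Newton's identities; the generating
function is `exp (Σ c i u^(i+1) / (i+1))`. -/
def newtonSeq (c : ℕ → A) : ℕ → A
  | 0 => 1
  | k + 1 => ((k + 1 : ℚ)⁻¹) • ∑ i ∈ range (k + 1), c i * newtonSeq c (k - i)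

@[simp]
theorem newtonSeq_zero (c : ℕ → A) : newtonSeq c 0 = 1 := by
  rw [newtonSeq]

theorem newtonSeq_succ (c : ℕ → A) (k : ℕ) :
    ((k + 1 : ℕ) : A) * newtonSeq c (k + 1) = ∑ p ∈ antidiagonal k, c p.1 * newtonSeq c p.2 := by
  rw [newtonSeq, Finset.Nat.sum_antidiagonal_eq_sum_range_succ_mk, ← nsmul_eq_mul,
    ← Nat.cast_smul_eq_nsmul ℚ, smul_smul]
  push_cast
  rw [mul_inv_cancel₀ (by positivity), one_smul]

theorem isUnit_natCast_succ (k : ℕ) : IsUnit ((k + 1 : ℕ) : A) := by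
  simpa using (IsUnit.mk0 ((k + 1 : ℕ) : ℚ) (by positivity)).map (algebraMap ℚ A)

theorem eq_newtonSeq {c f : ℕ → A} (h0 : f 0 = 1)
    (hsucc : ∀ k, ((k + 1 : ℕ) : A) * f (k + 1) = ∑ p ∈ antidiagonal k, c p.1 * f p.2) :
    f = newtonSeq c := by
  funext k
  induction k using Nat.strong_induction_on with
  | _ k ih =>
    rcases k with _ | k
    · simp [h0]
    refine (isUnit_natCast_succ k).mul_left_cancel ?_
    rw [hsucc, newtonSeq_succ]
    exact sum_congr rfl fun p hp => by rw [ih p.2 (by have := mem_antidiagonal.mp hp; omega)]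

theorem map_newtonSeq {B : Type*} [CommRing B] [Algebra ℚ B] (g : A →+* B) (c : ℕ → A) (k : ℕ) :
    g (newtonSeq c k) = newtonSeq (g ∘ c) k := by
  refine congrFun (eq_newtonSeq (f := g ∘ newtonSeq c) (by simp) fun k => ?_) k
  simp only [Function.comp_apply, ← map_natCast g, ← map_mul, newtonSeq_succ, map_sum]

end NewtonSequence

namespace PowerSeries

variable {A : Type*} [CommRing A]

theorem mk_neg_one_pow_mul_one_add_X : mk (fun i => (-1 : A) ^ i) * (1 + X) = 1 := by
  ext (_ | k)
  · simp
  · simp [mul_add, coeff_succ_mul_X, pow_succ]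

theorem coeff_one_add_X_pow (j n : ℕ) : coeff n ((1 + X : A⟦X⟧) ^ j) = (j.choose n : A) := by
  rw [show (1 + X : A⟦X⟧) ^ j = ((1 + Polynomial.X) ^ j : A[X]) by simp, Polynomial.coeff_coe,
    Polynomial.coeff_one_add_X_pow]

variable [Algebra ℚ A]

theorem derivative_mk_newtonSeq (c : ℕ → A) :
    d⁄dX A (mk (newtonSeq c)) = mk c * mk (newtonSeq c) := by
  ext k
  rw [coeff_derivative, coeff_mul, coeff_mk, mul_comm, ← Nat.cast_succ, newtonSeq_succ]
  simp

theorem eq_mk_newtonSeq {c : ℕ → A} {F : A⟦X⟧} (h0 : constantCoeff F = 1)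
    (hF : d⁄dX A F = mk c * F) : F = mk (newtonSeq c) := by
  have hcoeff := eq_newtonSeq (c := c) (f := fun k => coeff k F) (by simpa using h0) fun k => by
    have hk := congrArg (coeff k) hF
    rw [coeff_derivative, coeff_mul] at hk
    simpa [mul_comm] using hk
  ext k
  simp [← hcoeff]

/-- `Σ (-1)^i X^i = (1 + X)⁻¹` is the logarithmic derivative of `1 + X`. -/
theorem mk_newtonSeq_add_natCast_mul_neg_one_pow (c : ℕ → A) (j : ℕ) :
    mk (newtonSeq fun i => c i + j * (-1) ^ i) = (1 + X) ^ j * mk (newtonSeq c) := by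
  induction j with
  | zero => simp
  | succ j ih =>
    symm
    apply eq_mk_newtonSeq (by simp)
    have hc : mk (fun i => c i + ((j + 1 : ℕ) : A) * (-1) ^ i)
        = mk (fun i => c i + j * (-1) ^ i) + mk fun i => (-1) ^ i := by
      ext; simp; ring
    rw [pow_succ, mul_comm _ (1 + X), mul_assoc, ← ih, Derivation.leibniz, derivative_mk_newtonSeq,
      hc]
    simp only [map_add, derivative_one, derivative_X, smul_eq_mul]
    linear_combination -(mk (newtonSeq fun i => c i + j * (-1) ^ i)) *
      (mk_neg_one_pow_mul_one_add_X (A := A))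

end PowerSeries

theorem newtonSeq_add_natCast_mul_neg_one_pow {A : Type*} [CommRing A] [Algebra ℚ A]
    (c : ℕ → A) (j m : ℕ) :
    newtonSeq (fun i => c i + j * (-1) ^ i) m
      = ∑ q ∈ antidiagonal m, (j.choose q.1 : A) * newtonSeq c q.2 := by
  simpa [PowerSeries.coeff_mul, PowerSeries.coeff_one_add_X_pow] using
    congrArg (PowerSeries.coeff m) (PowerSeries.mk_newtonSeq_add_natCast_mul_neg_one_pow c j)

section NewtonMatrix

variable {A : Type*} [CommRing A]

def newtonEntry (c : ℕ → A) (i j : ℕ) : A :=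
  if j ≤ i then c (i - j) else if j = i + 1 then -((i + 1 : ℕ) : A) else 0

def newtonMatrix (c : ℕ → A) (k : ℕ) : Matrix (Fin k) (Fin k) A :=
  Matrix.of fun i j => newtonEntry c i j

theorem det_newtonMatrix_submatrix_castSucc_succ (c : ℕ → A) (k : ℕ) :
    ((newtonMatrix c (k + 1)).submatrix Fin.castSucc Fin.succ).det = (-1) ^ k * k ! := by
  rw [det_of_isLowerTriangular]
  · calc ∏ r : Fin k, (newtonMatrix c (k + 1)).submatrix Fin.castSucc Fin.succ r r
        = ∏ r : Fin k, (-1) * (((r : ℕ) + 1 : ℕ) : A) :=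
          Finset.prod_congr rfl fun r _ => by simp [newtonMatrix, newtonEntry]
      _ = (-1) ^ k * k ! := by
          rw [Finset.prod_mul_distrib, Finset.prod_const, Finset.card_univ, Fintype.card_fin,
            Fin.prod_univ_eq_prod_range (fun r => ((r + 1 : ℕ) : A)), ← Nat.cast_prod,
            Finset.prod_range_add_one_eq_factorial]
  · intro r s hrs
    have : (r : ℕ) < s := hrs
    simp only [submatrix_apply, newtonMatrix, of_apply, newtonEntry, Fin.val_castSucc,
      Fin.val_succ]
    rw [if_neg (by omega), if_neg (by omega)]

variable [Algebra ℚ A]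

theorem sum_range_newtonEntry_mul_newtonSeq (c : ℕ → A) (i : ℕ) :
    ∑ j ∈ range (i + 1), newtonEntry c i j * newtonSeq c j
      = ((i + 1 : ℕ) : A) * newtonSeq c (i + 1) := by
  rw [newtonSeq_succ, ← Finset.Nat.sum_antidiagonal_swap,
    Finset.Nat.sum_antidiagonal_eq_sum_range_succ_mk]
  exact sum_congr rfl fun j hj => by
    simp [newtonEntry, Nat.lt_succ_iff.mp (Finset.mem_range.mp hj)]

theorem sum_range_newtonEntry_mul_newtonSeq_eq_zero (c : ℕ → A) {i N : ℕ} (hN : i + 2 ≤ N) :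
    ∑ j ∈ range N, newtonEntry c i j * newtonSeq c j = 0 := by
  have hvanish : ∀ j ≥ i + 2, newtonEntry c i j * newtonSeq c j = 0 := fun j hj => by
    rw [newtonEntry, if_neg (by omega), if_neg (by omega), zero_mul]
  rw [Finset.eventually_constant_sum hvanish hN, Finset.sum_range_succ,
    sum_range_newtonEntry_mul_newtonSeq, newtonEntry, if_neg (by omega), if_pos rfl]
  ring

theorem newtonMatrix_mulVec_newtonSeq (c : ℕ → A) (k : ℕ) :
    newtonMatrix c (k + 1) *ᵥ (fun j => newtonSeq c j)
      = Pi.single (Fin.last k) (((k + 1 : ℕ) : A) * newtonSeq c (k + 1)) := by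
  ext i
  rw [mulVec, dotProduct]
  simp only [newtonMatrix, of_apply]
  rw [Fin.sum_univ_eq_sum_range (fun j => newtonEntry c i j * newtonSeq c j)]
  rcases Fin.eq_castSucc_or_eq_last i with ⟨i, rfl⟩ | rfl
  · rw [Pi.single_eq_of_ne (Fin.castSucc_lt_last i).ne,
      sum_range_newtonEntry_mul_newtonSeq_eq_zero c (by simp)]
  · simpa using sum_range_newtonEntry_mul_newtonSeq c k

theorem det_newtonMatrix (c : ℕ → A) (k : ℕ) : (newtonMatrix c k).det = k ! * newtonSeq c k := by
  rcases k with _ | k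
  · simp
  -- Cramer's rule: the `0`-th entry of `adj M *ᵥ (M *ᵥ h)` is `det M * h 0 = det M`.
  have hcramer := congrFun (mulVec_mulVec (fun j : Fin (k + 1) => newtonSeq c j)
    (newtonMatrix c (k + 1)).adjugate (newtonMatrix c (k + 1))).symm 0
  rw [adjugate_mul, newtonMatrix_mulVec_newtonSeq, mulVec_single] at hcramer
  simp only [smul_mulVec, one_mulVec, Pi.smul_apply, Fin.val_zero, newtonSeq_zero, smul_eq_mul,
    mul_one, col_apply, adjugate_fin_succ_eq_det_submatrix, Fin.succAbove_last, Fin.succAbove_zero,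
    det_newtonMatrix_submatrix_castSucc_succ, Fin.val_last, add_zero, op_smul_eq_mul,
    ← mul_assoc, ← mul_pow, neg_one_mul, neg_neg, one_pow, one_mul] at hcramer
  rw [hcramer, Nat.factorial_succ]
  push_cast
  ring

end NewtonMatrix

section Homogeneity

variable {σ R : Type*} [CommRing R] {w : σ → ℕ}

open MvPolynomial

theorem isWeightedHomogeneous_newtonSeq [Algebra ℚ R] {c : ℕ → MvPolynomial σ R}
    (hc : ∀ i, IsWeightedHomogeneous w (c i) (i + 1)) (k : ℕ) :
    IsWeightedHomogeneous w (newtonSeq c k) k := by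
  induction k using Nat.strong_induction_on with
  | _ k ih =>
    rcases k with _ | k
    · simpa using isWeightedHomogeneous_one R w
    rw [newtonSeq]
    refine Submodule.smul_of_tower_mem (weightedHomogeneousSubmodule R w (k + 1)) _ ?_
    refine IsWeightedHomogeneous.sum _ _ _ fun i hi => ?_
    have hik : i ≤ k := Nat.lt_succ_iff.mp (Finset.mem_range.mp hi)
    simpa [show i + 1 + (k - i) = k + 1 by omega] using (hc i).mul (ih (k - i) (by omega))

theorem isWeightedHomogeneous_det_of_shift {ι : Type*} [Fintype ι] [DecidableEq ι]
    {p : ℕ → MvPolynomial σ R} (hp : ∀ m, IsWeightedHomogeneous w (p m) m) (r s : ι → ℕ) :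
    IsWeightedHomogeneous w (of fun i j => if s j ≤ r i then p (r i - s j) else 0).det
      (∑ i, r i - ∑ j, s j) := by
  rw [det_apply]
  refine IsWeightedHomogeneous.sum _ _ _ fun τ _ => ?_
  refine Submodule.smul_of_tower_mem (weightedHomogeneousSubmodule R w _) _ ?_
  by_cases hτ : ∀ j, s j ≤ r (τ j)
  · have hdeg : ∑ j, (r (τ j) - s j) = ∑ i, r i - ∑ j, s j := by
      rw [← Equiv.sum_comp τ r, eq_tsub_iff_add_eq_of_le, ← Finset.sum_add_distrib]
      · exact Fintype.sum_congr _ _ fun j => Nat.sub_add_cancel (hτ j)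
      · exact Finset.sum_le_sum fun j _ => hτ j
    rw [← hdeg]
    refine IsWeightedHomogeneous.prod _ _ _ fun j _ => ?_
    simpa [hτ j] using hp (r (τ j) - s j)
  · obtain ⟨j, hj⟩ := not_forall.mp hτ
    rw [Finset.prod_eq_zero (Finset.mem_univ j) (by simp [hj])]
    exact isWeightedHomogeneous_zero R w _

end Homogeneity

section Pascal

variable {A : Type*} [CommRing A]

theorem det_pascal (n : ℕ) : (of fun a j : Fin n => ((j : ℕ).choose a : A)).det = 1 := by
  rw [det_of_isUpperTriangular]
  · simp
  · intro j a haj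
    simp [Nat.choose_eq_zero_of_lt (show (a : ℕ) < j from haj)]

theorem det_sum_antidiagonal_choose_mul (p : ℕ → A) {n : ℕ} (r : Fin n → ℕ) :
    (of fun i j : Fin n => ∑ q ∈ antidiagonal (r i), ((j : ℕ).choose q.1 : A) * p q.2).det
      = (of fun i a : Fin n => if (a : ℕ) ≤ r i then p (r i - a) else 0).det := by
  suffices hfac : (of fun i j : Fin n => ∑ q ∈ antidiagonal (r i), ((j : ℕ).choose q.1 : A) * p q.2)
      = (of fun i a : Fin n => if (a : ℕ) ≤ r i then p (r i - a) else 0)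
        * of fun a j : Fin n => ((j : ℕ).choose a : A) by
    rw [hfac, det_mul, det_pascal, mul_one]
  ext i j
  set g : ℕ → A := fun a => (if a ≤ r i then p (r i - a) else 0) * ((j : ℕ).choose a : A)
  have hg : ∀ N, (j : ℕ) + 1 ≤ N → ∑ a ∈ range N, g a = ∑ a ∈ range (j + 1), g a :=
    fun N hN => Finset.eventually_constant_sum (fun a ha => by simp [g, Nat.choose_eq_zero_of_lt
      (show (j : ℕ) < a by omega)]) hN
  calc ∑ q ∈ antidiagonal (r i), ((j : ℕ).choose q.1 : A) * p q.2
      = ∑ a ∈ range (r i + 1), g a := by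
        rw [Finset.Nat.sum_antidiagonal_eq_sum_range_succ_mk]
        exact sum_congr rfl fun a ha => by
          simp [g, Nat.lt_succ_iff.mp (Finset.mem_range.mp ha), mul_comm]
    _ = ∑ a ∈ range (r i + 1 + (j + 1)), g a :=
        (Finset.eventually_constant_sum (fun a ha => by simp [g, show ¬a ≤ r i by omega])
          (by omega)).symm
    _ = ∑ a ∈ range (j + 1), g a := hg _ (by omega)
    _ = ∑ a : Fin n, _ := (hg n j.isLt).symm.trans (Fin.sum_univ_eq_sum_range g n).symm

end Pascal

theorem Fin.sum_two_mul_add_one_sub_sum_val (k : ℕ) :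
    ∑ i : Fin k, (2 * (i : ℕ) + 1) - ∑ i : Fin k, (i : ℕ) = k * (k + 1) / 2 := by
  have hgauss := Finset.sum_range_id_mul_two (k + 1)
  rw [Finset.sum_range_succ, Nat.add_sub_cancel] at hgauss
  rw [Fin.sum_univ_eq_sum_range (fun i => 2 * i + 1), Fin.sum_univ_eq_sum_range (fun i => i),
    Finset.sum_add_distrib, ← Finset.mul_sum, Finset.sum_const, Finset.card_range, smul_eq_mul,
    mul_one, mul_comm k]
  omega

theorem xpoly_eq_newtonSeq (k : ℕ) : xpoly k = newtonSeq (fun i => zj (i + 1)) k := by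
  rcases k with _ | k
  · simp [xpoly]
  rw [xpoly, if_neg k.succ_ne_zero, show Mhess (k + 1) = newtonMatrix (fun i => zj (i + 1)) (k + 1)
    from rfl, det_newtonMatrix, ← mul_assoc, ← map_natCast (C.comp MvPolynomial.C),
    RingHom.comp_apply, ← C_mul, ← MvPolynomial.C_mul, inv_mul_cancel₀ (by positivity)]
  simp

/-- `z_{i+1}(0) = (-1)^i t_{i+1}`. -/
noncomputable def altVar (i : ℕ) : Rt := (-1) ^ i * MvPolynomial.X (i + 1)

theorem isWeightedHomogeneous_altVar (i : ℕ) :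
    MvPolynomial.IsWeightedHomogeneous (fun j : ℕ => j) (altVar i) (i + 1) := by
  simpa [altVar] using ((MvPolynomial.isWeightedHomogeneous_one ℚ _).neg.pow i).mul
    (MvPolynomial.isWeightedHomogeneous_X ℚ (fun j : ℕ => j) (i + 1))

theorem eval_natCast_xpoly (j m : ℕ) :
    (xpoly m).eval (j : Rt) = newtonSeq (fun i => altVar i + j * (-1) ^ i) m := by
  rw [xpoly_eq_newtonSeq, ← coe_evalRingHom, map_newtonSeq]
  congr 1
  funext i
  simp [zj, altVar, pow_succ]
  ring

theorem qval_eq_det (n : ℕ) :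
    qval n = (of fun i j : Fin n => ∑ q ∈ antidiagonal (2 * (i : ℕ) + 1),
      ((j : ℕ).choose q.1 : Rt) * newtonSeq altVar q.2).det := by
  rw [qval, Qcas, ← coe_evalRingHom, RingHom.map_det]
  congr 1
  ext i j
  simp [eval_comp, eval_natCast_xpoly, newtonSeq_add_natCast_mul_neg_one_pow]

/-- `q_k` is weighted homogeneous of weight `k(k+1)/2` with
respect to the weighting `w(t_j) = j`: every monomial `∏ t_j^{d_j}` occurring
in `q_k` satisfies `Σ j·d_j = k(k+1)/2`. -/
theorem qval_weighted_homogeneous (k : ℕ) :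
    MvPolynomial.IsWeightedHomogeneous (fun j : ℕ => j) (qval k) (k * (k + 1) / 2) := by
  rw [qval_eq_det, det_sum_antidiagonal_choose_mul, ← Fin.sum_two_mul_add_one_sub_sum_val]
  exact isWeightedHomogeneous_det_of_shift
    (isWeightedHomogeneous_newtonSeq isWeightedHomogeneous_altVar) _ _
end

section
/- Let p : ℕ → ℚ satisfy p(0) = p(1) = 1 and p(n+2)·p(n) = p(n+1)² + 1 for all n ≥ 0. Then p(n+1) = fib(2n+1) for every n ≥ 0, where fib is the Fibonacci sequence with fib(1) = fib(2) = 1; in particular every p(n) is a positive integer (the sequence 1, 1, 2, 5, 13, 34, 89, … consists of every other Fibonacci number). -/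
lemma my_cassini : ∀ n : ℕ, (Nat.fib (n+1) : ℤ)^2 - Nat.fib (n+2) * Nat.fib n = (-1)^n := by
  intro n
  induction n with
  | zero => simp
  | succ k ih =>
    have h2 : (Nat.fib (k+3) : ℤ) = Nat.fib (k+1) + Nat.fib (k+2) := by
      exact_mod_cast congrArg (Nat.cast : ℕ → ℤ) (Nat.fib_add_two (n := k+1))
    have h1 : (Nat.fib (k+2) : ℤ) = Nat.fib k + Nat.fib (k+1) := by
      exact_mod_cast congrArg (Nat.cast : ℕ → ℤ) (Nat.fib_add_two (n := k))
    rw [h2, pow_succ]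
    linear_combination (-1 : ℤ) * ih + (Nat.fib (k+2) : ℤ) * h1

lemma key_s18 (m : ℕ) : (Nat.fib (2*m+5) : ℚ) * Nat.fib (2*m+1) = (Nat.fib (2*m+3) : ℚ)^2 + 1 := by
  have c1 : (Nat.fib (2*m+2) : ℤ)^2 - Nat.fib (2*m+3) * Nat.fib (2*m+1) = (-1)^(2*m+1) := my_cassini (2*m+1)
  have c2 : (Nat.fib (2*m+4) : ℤ)^2 - Nat.fib (2*m+5) * Nat.fib (2*m+3) = (-1)^(2*m+3) := my_cassini (2*m+3)
  have e : ∀ k, (Nat.fib (k+2) : ℤ) = Nat.fib k + Nat.fib (k+1) := fun k => by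
    exact_mod_cast congrArg (Nat.cast : ℕ → ℤ) (Nat.fib_add_two (n := k))
  have h3 := e (2*m+1)
  have h4 := e (2*m+2)
  have h5 := e (2*m+3)
  have neg1 : ((-1 : ℤ))^(2*m+1) = -1 := by
    simpa using Odd.neg_one_pow ⟨m, by ring⟩
  have neg3 : ((-1 : ℤ))^(2*m+3) = -1 := by
    simpa using Odd.neg_one_pow ⟨m+1, by ring⟩
  rw [neg1] at c1; rw [neg3] at c2
  have : (Nat.fib (2*m+5) : ℤ) * Nat.fib (2*m+1) = (Nat.fib (2*m+3) : ℤ)^2 + 1 := by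
    nlinarith [c1, c2, h3, h4, h5]
  exact_mod_cast congrArg (fun z : ℤ => (z : ℚ)) this

/-- the solution of `p(n+2) p(n) = p(n+1)² + 1`, `p(0) = p(1) = 1`
consists of every other Fibonacci number: `p(n+1) = fib(2n+1)` for all `n ≥ 0`;
in particular every `p(n)` is a positive integer. -/
theorem somos_every_other_fibonacci (p : ℕ → ℚ)
    (h0 : p 0 = 1) (h1 : p 1 = 1)
    (hrec : ∀ n : ℕ, p (n + 2) * p n = p (n + 1) ^ 2 + 1) :
    (∀ n : ℕ, p (n + 1) = Nat.fib (2 * n + 1)) ∧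
    (∀ n : ℕ, ∃ m : ℕ, 0 < m ∧ p n = m) := by
  have main : ∀ n : ℕ, p (n + 1) = Nat.fib (2 * n + 1) := by
    have H : ∀ n : ℕ, p (n + 1) = Nat.fib (2 * n + 1) ∧ p (n + 2) = Nat.fib (2 * n + 3) := by
      intro n
      induction n with
      | zero =>
        have := hrec 0
        rw [h0, h1] at this
        constructor
        · simpa using h1
        · norm_num at this ⊢
          linarith
      | succ k ih =>
        obtain ⟨ih1, ih2⟩ := ih
        refine ⟨by simpa [Nat.mul_succ] using ih2, ?_⟩
        have hr := hrec (k + 1)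
        rw [ih1, ih2] at hr
        have hfpos : (0 : ℚ) < Nat.fib (2 * k + 1) := by
          exact_mod_cast Nat.fib_pos.mpr (by omega)
        have hk := key_s18 k
        have e1 : 2 * (k + 1) + 3 = 2 * k + 5 := by ring
        rw [e1]
        have : p (k + 3) * (Nat.fib (2*k+1) : ℚ) = (Nat.fib (2*k+5) : ℚ) * Nat.fib (2*k+1) := by
          rw [hk]; convert hr using 2
        have := mul_right_cancel₀ (ne_of_gt hfpos) this
        simpa using this
    exact fun n => (H n).1
  refine ⟨main, ?_⟩
  intro n
  cases n with
  | zero => exact ⟨1, by norm_num [h0]⟩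
  | succ k =>
    refine ⟨Nat.fib (2 * k + 1), Nat.fib_pos.mpr (by omega), main k⟩
end
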